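/- arXiv:1305.3543 — 9 statements merged into one kernel-verified Lean document; each statement's English description precedes it below -/
import Mathlib

section
/- Let R be a commutative ring and let c : ℤ → R satisfy c_0 = 1 and c_r = 0 for all r < 0. Let m ≥ 1 and let α = (α_1,…,α_m) be a vector of integers. For a subset S of the set of pairs Δ_m := {(i,j) : 1 ≤ i < j ≤ m} and 1 ≤ k ≤ m, set α^S_k := α_k + #{j : (k,j) ∈ S} − #{i : (i,k) ∈ S}. Then ∑_{S ⊆ Δ_m} (−1)^{#S} ∏_{k=1}^m c_{α^S_k} = det( c_{α_i + j − i} )_{1 ≤ i,j ≤ m}. (This is the identity R^0 c_α = det(c_{α_i+j−i}), expressing the expansion of the raising operator product ∏_{i<j}(1 − R_{ij}) applied to c_α.) -/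
/-!
Let `ε` be the `R`-linear functional on the Laurent polynomial ring `R[x₁^{±1}, …, x_m^{±1}]`
sending the monomial `x^β` to `∏ₖ c (αₖ + βₖ)`. The raising operator `R_{ij}` becomes
multiplication by `xᵢ / xⱼ`, so the left-hand side is `ε (∏_{i<j} (1 - xᵢ / xⱼ))`.
Dividing the Vandermonde identity `∏_{i<j} (xⱼ - xᵢ) = ∑_σ sign σ ∏ᵢ xᵢ ^ σ(i)` by
`∏_{i<j} xⱼ = x^(0, 1, …, m-1)` gives `∏_{i<j} (1 - xᵢ / xⱼ) = ∑_σ sign σ x^(σ - id)`,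
and applying `ε` yields the Leibniz expansion of `det (c (αᵢ + j - i))`.
-/

open Finset AddMonoidAlgebra Equiv

theorem prod_filter_fst_lt_snd {α M : Type*} [Fintype α] [LinearOrder α]
    [LocallyFiniteOrderTop α] [CommMonoid M] (f : α → α → M) :
    ∏ p ∈ univ.filter (fun p : α × α => p.1 < p.2), f p.1 p.2 = ∏ i, ∏ j ∈ Ioi i, f i j := by
  simp_rw [prod_filter, Fintype.prod_prod_type, ← filter_lt_eq_Ioi, prod_filter]

theorem card_filter_fst_lt_snd_snd_eq {m : ℕ} (k : Fin m) :
    #{p ∈ univ.filter (fun p : Fin m × Fin m => p.1 < p.2) | p.2 = k} = k := by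
  rw [← Fin.card_Iio k]
  refine card_nbij' Prod.fst (fun i => (i, k)) ?_ ?_ ?_ ?_ <;> rintro ⟨i, j⟩ <;> grind

theorem sum_pi_single_one_apply {ι κ : Type*} [DecidableEq κ] (s : Finset ι) (g : ι → κ)
    (k : κ) : (∑ p ∈ s, Pi.single (g p) (1 : ℤ) : κ → ℤ) k = #{p ∈ s | g p = k} := by
  simp [Finset.sum_apply, Pi.single_apply, eq_comm]

/-- The shift `eᵢ - eⱼ` by which the raising operator `R_{ij}` moves an exponent vector. -/
def raisingShift {ι : Type*} [DecidableEq ι] (p : ι × ι) : ι → ℤ :=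
  Pi.single p.1 1 - Pi.single p.2 1

theorem sum_raisingShift_apply {ι : Type*} [DecidableEq ι] (S : Finset (ι × ι)) (k : ι) :
    (∑ p ∈ S, raisingShift p) k = #{p ∈ S | p.1 = k} - #{p ∈ S | p.2 = k} := by
  simp only [raisingShift, sum_sub_distrib, Pi.sub_apply, sum_pi_single_one_apply]

section LaurentPolynomial

variable {R : Type*} [CommRing R]

theorem prod_one_sub_single_eq_sum_powerset {G ι : Type*} [AddCommMonoid G]
    (s : Finset ι) (d : ι → G) :
    ∏ p ∈ s, (1 - single (d p) (1 : R)) =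
      ∑ t ∈ s.powerset, single (∑ p ∈ t, d p) ((-1 : R) ^ t.card) := by
  simp_rw [sub_eq_add_neg, prod_one_add, ← single_neg, prod_single, prod_const]

theorem det_vandermonde_single (m : ℕ) :
    (Matrix.vandermonde fun i : Fin m => single (Pi.single i 1 : Fin m → ℤ) (1 : R)).det =
      ∑ σ : Perm (Fin m), single (fun k => (σ k : ℤ)) ((Perm.sign σ : ℤ) : R) := by
  rw [← Matrix.det_transpose, Matrix.det_apply]
  refine sum_congr rfl fun σ _ => ?_
  have hexp : ∑ i, (σ i : ℕ) • (Pi.single i 1 : Fin m → ℤ) = fun k => (σ k : ℤ) := by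
    ext k
    simp [Finset.sum_apply, Pi.single_apply]
  simp only [Matrix.transpose_apply, Matrix.vandermonde_apply, single_pow, prod_single, hexp]
  simp [Units.smul_def]

theorem prod_one_sub_single_raisingShift (m : ℕ) :
    ∏ p ∈ univ.filter (fun p : Fin m × Fin m => p.1 < p.2),
        (1 - single (raisingShift p) (1 : R)) =
      ∑ σ : Perm (Fin m), single (fun k => (σ k : ℤ) - k) ((Perm.sign σ : ℤ) : R) := by
  set Δ := univ.filter (fun p : Fin m × Fin m => p.1 < p.2)
  set x : Fin m → R[Fin m → ℤ] := fun i => single (Pi.single i 1) 1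
  have factor : ∀ p : Fin m × Fin m,
      1 - single (raisingShift p) (1 : R) = (x p.2 - x p.1) * single (-Pi.single p.2 1) 1 := by
    intro p
    rw [sub_mul, single_mul_single, single_mul_single, raisingShift]
    simp [AddMonoidAlgebra.one_def, sub_eq_add_neg]
  have staircase : ∑ p ∈ Δ, Pi.single p.2 (1 : ℤ) = fun k : Fin m => (k : ℤ) := by
    funext k
    rw [sum_pi_single_one_apply, card_filter_fst_lt_snd_snd_eq]
  calc _ = (∏ p ∈ Δ, (x p.2 - x p.1)) * ∏ p ∈ Δ, single (-Pi.single p.2 1) 1 := by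
        rw [← prod_mul_distrib]
        exact prod_congr rfl fun p _ => factor p
    _ = (Matrix.vandermonde x).det * single (-fun k : Fin m => (k : ℤ)) 1 := by
        rw [prod_filter_fst_lt_snd (fun i j => x j - x i), Matrix.det_vandermonde, prod_single,
          sum_neg_distrib, staircase, prod_const_one]
    _ = _ := by
        rw [det_vandermonde_single, sum_mul]
        simp only [single_mul_single, mul_one, ← sub_eq_add_neg]
        rfl

noncomputable def monomialEval {G : Type*} (f : G → R) : R[G] →ₗ[R] R :=
  (AddMonoidAlgebra.basis G R).constr R f

theorem monomialEval_single {G : Type*} (f : G → R) (g : G) (r : R) :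
    monomialEval f (single g r) = r * f g := by
  rw [← mul_one r, ← smul_single', map_smul, mul_one, monomialEval, ← basis_apply,
    Module.Basis.constr_basis, smul_eq_mul]

end LaurentPolynomial

theorem raising_operator_determinant_general (R : Type*) [CommRing R]
    (c : ℤ → R)
    (m : ℕ) (α : Fin m → ℤ) :
    ∑ S ∈ (Finset.univ.filter (fun p : Fin m × Fin m => p.1 < p.2)).powerset,
      (-1 : R) ^ S.card *
        ∏ k : Fin m,
          c (α k + ((S.filter (fun p => p.1 = k)).card : ℤ)
              - ((S.filter (fun p => p.2 = k)).card : ℤ)) =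
    Matrix.det (Matrix.of fun i j : Fin m => c (α i + (j : ℤ) - (i : ℤ))) := by
  let ε := monomialEval fun β : Fin m → ℤ => ∏ k, c (α k + β k)
  calc _ = ε (∏ p ∈ univ.filter (fun p : Fin m × Fin m => p.1 < p.2),
          (1 - single (raisingShift p) (1 : R))) := by
        rw [prod_one_sub_single_eq_sum_powerset, map_sum]
        refine sum_congr rfl fun S _ => ?_
        simp only [ε, monomialEval_single, sum_raisingShift_apply, add_sub_assoc]
    _ = ε (∑ σ : Perm (Fin m), single (fun k => (σ k : ℤ) - k) ((Perm.sign σ : ℤ) : R)) := by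
        rw [prod_one_sub_single_raisingShift]
    _ = _ := by
        rw [← Matrix.det_transpose, Matrix.det_apply', map_sum]
        simp [ε, monomialEval_single, add_sub_assoc]

/-- For a commutative ring `R` and `c : ℤ → R` with `c 0 = 1` and
`c r = 0` for `r < 0`, the expansion of the raising operator product
`∏_{i<j} (1 - R_{ij})` applied to `c_α` equals the determinant
`det(c_{α_i + j - i})`. -/
theorem raising_operator_determinant (R : Type*) [CommRing R]
    (c : ℤ → R) (hc0 : c 0 = 1) (hcneg : ∀ r : ℤ, r < 0 → c r = 0)
    (m : ℕ) (hm : 1 ≤ m) (α : Fin m → ℤ) :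
    ∑ S ∈ (Finset.univ.filter (fun p : Fin m × Fin m => p.1 < p.2)).powerset,
      (-1 : R) ^ S.card *
        ∏ k : Fin m,
          c (α k + ((S.filter (fun p => p.1 = k)).card : ℤ)
              - ((S.filter (fun p => p.2 = k)).card : ℤ)) =
    Matrix.det (Matrix.of fun i j : Fin m => c (α i + (j : ℤ) - (i : ℤ))) :=
  raising_operator_determinant_general R c m α
end

section
/- Fix integers n ≥ 1 and 0 ≤ k ≤ n−1 and set m := n−k. For a k-strict partition λ = (λ_1,…,λ_m) (zero parts allowed) with λ_1 ≤ n+k, define p_j(λ) := n + k + j − λ_j − #{i < j : λ_i + λ_j > 2k + j − i} for 1 ≤ j ≤ m. Then p_1(λ) < p_2(λ) < ⋯ < p_m(λ), each p_j(λ) lies in {1,…,2n}, and the map λ ↦ {p_1(λ),…,p_m(λ)} is a bijection from the set of k-strict partitions with at most m parts and largest part at most n+k onto the set of index sets, i.e. m-element subsets P ⊆ {1,…,2n} such that i + j ≠ 2n + 1 for all i, j ∈ P. -/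
/-!
For a `k`-strict `λ` and `i < j`, the pair is related (`λ_i + λ_j > 2k + j - i`) exactly when
`p_i + p_j ≤ 2n`; otherwise `p_i + p_j ≥ 2n + 2`. So the correction term in `p_j(λ)` counts the
`i < j` with `p_i + p_j ≤ 2n`, a quantity read off from `p` alone, and `λ` is recovered from `p`.
Conversely, for an index set `P` the same formula defines a `k`-strict partition `λ` (the only
delicate points being that it is weakly decreasing, strictly so above `k`, and nonnegative),
and the equivalence above, now proved from the side of `P`, shows `p(λ) = P`.
-/

open Finset

/-- A `k`-strict partition with at most `m` parts and all parts at most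
`n + k`: weakly decreasing, no part strictly greater than `k` is repeated. -/
def IsKStrictInRect (n k m : ℕ) (lam : Fin m → ℕ) : Prop :=
  Antitone lam ∧ (∀ i j : Fin m, i ≠ j → k < lam i → lam i ≠ lam j) ∧
    ∀ i, lam i ≤ n + k

/-- The index function `p_j(λ) = n + k + j − λ_j − #{i < j : λ_i + λ_j > 2k + j − i}`
(with `j` one-based, here `j : Fin m` zero-based). -/
def indexFun (n k m : ℕ) (lam : Fin m → ℕ) (j : Fin m) : ℤ :=
  (n : ℤ) + (k : ℤ) + ((j : ℕ) + 1 : ℕ) - (lam j : ℤ) -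
    ((Finset.univ.filter
        (fun i : Fin m => i < j ∧ 2 * k + ((j : ℕ) - (i : ℕ)) < lam i + lam j)).card : ℤ)

/-- An index set: an `m`-element subset `P ⊆ {1,…,2n}` with `i + j ≠ 2n + 1`
for all `i, j ∈ P`. -/
def IsIndexSet (n m : ℕ) (P : Finset ℤ) : Prop :=
  P.card = m ∧ (∀ x ∈ P, 1 ≤ x ∧ x ≤ 2 * (n : ℤ)) ∧
    ∀ x ∈ P, ∀ y ∈ P, x + y ≠ 2 * (n : ℤ) + 1

namespace Fin

variable {m : ℕ}

theorem val_orderSucc_of_not_isMax {i : Fin m} (hi : ¬IsMax i) :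
    ((Order.succ i : Fin m) : ℕ) = i + 1 := by
  obtain _ | m := m
  · exact i.elim0
  obtain ⟨i, rfl⟩ := Fin.eq_castSucc_of_ne_last (x := i) fun h => hi fun b _ => h ▸ le_last b
  simp

theorem sub_le_sub_of_strictMonoOn {f : Fin m → ℤ} {i j : Fin m} (hij : i ≤ j)
    (hf : StrictMonoOn f (Set.Icc i j)) : (j : ℤ) - i ≤ f j - f i := by
  have hmaps : Set.MapsTo f (Icc i j) (Icc (f i) (f j)) := fun h hh => by
    rw [coe_Icc] at hh
    exact mem_Icc.2 ⟨hf.monotoneOn ⟨le_rfl, hij⟩ hh hh.1, hf.monotoneOn hh ⟨hij, le_rfl⟩ hh.2⟩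
  have hcard := card_le_card_of_injOn f hmaps (by rw [coe_Icc]; exact hf.injOn)
  rw [card_Icc, Int.card_Icc] at hcard
  have : (i : ℕ) ≤ j := hij
  omega

end Fin

section

variable {n k m : ℕ}

def relatedBefore (k : ℕ) (lam : Fin m → ℕ) (j : Fin m) : Finset (Fin m) :=
  {i | i < j ∧ 2 * k + ((j : ℕ) - (i : ℕ)) < lam i + lam j}

def lowSumBefore (n : ℕ) (p : Fin m → ℤ) (j : Fin m) : Finset (Fin m) :=
  {i | i < j ∧ p i + p j ≤ 2 * n}

/-- The formula for `p_j(λ)` solved for `λ_j`, after replacing `relatedBefore` by `lowSumBefore`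
(the two agree, see `IsKStrictInRect.relatedBefore_eq_lowSumBefore`). -/
def partOfIndex (n k : ℕ) (p : Fin m → ℤ) (j : Fin m) : ℤ :=
  n + k + j + 1 - p j - #(lowSumBefore n p j)

theorem indexFun_eq (lam : Fin m → ℕ) (j : Fin m) :
    indexFun n k m lam j = n + k + j + 1 - lam j - #(relatedBefore k lam j) := by
  simp only [indexFun, relatedBefore]
  push_cast
  ring

theorem card_relatedBefore_le (lam : Fin m → ℕ) (j : Fin m) : #(relatedBefore k lam j) ≤ j :=
  (card_le_card fun _ hi => mem_Iio.2 (mem_filter.1 hi).2.1).trans (Fin.card_Iio j).le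

theorem indexFun_le_two_mul (hm : m ≤ n - k) (lam : Fin m → ℕ) (j : Fin m) :
    indexFun n k m lam j ≤ 2 * n := by
  have := j.isLt
  rw [indexFun_eq]
  omega

namespace IsKStrictInRect

variable {lam : Fin m → ℕ} (hlam : IsKStrictInRect n k m lam)
include hlam

theorem add_sub_le {i j : Fin m} (hij : i ≤ j) (hj : k < lam j) :
    lam j + ((j : ℕ) - i) ≤ lam i := by
  have hmono : StrictMonoOn (fun h => -(lam h : ℤ)) (Set.Icc i j) := by
    intro a ha b hb hab
    have hba : lam b ≤ lam a := hlam.1 hab.le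
    have hkb : k < lam b := hj.trans_le (hlam.1 hb.2)
    have hne : lam a ≠ lam b := hlam.2.1 a b hab.ne (hkb.trans_le hba)
    simp only [neg_lt_neg_iff, Nat.cast_lt]
    omega
  have := Fin.sub_le_sub_of_strictMonoOn hij hmono
  have : (i : ℕ) ≤ j := hij
  omega

theorem indexFun_add_indexFun_le {i j : Fin m} (hij : i < j)
    (hrel : 2 * k + ((j : ℕ) - i) < lam i + lam j) :
    indexFun n k m lam i + indexFun n k m lam j ≤ 2 * n := by
  have hij' : (i : ℕ) < j := hij
  have hki : k < lam i := by have := hlam.1 hij.le; omega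
  have hci : Iio i ⊆ relatedBefore k lam i := fun h hh => by
    have hh : h < i := mem_Iio.1 hh
    have := hlam.add_sub_le hh.le hki
    have : (h : ℕ) < i := hh
    simp only [relatedBefore, mem_filter, mem_univ, true_and]
    omega
  have hcj : Iic i ⊆ relatedBefore k lam j := fun h hh => by
    have hh : h ≤ i := mem_Iic.1 hh
    have := hlam.add_sub_le hh hki
    have : (h : ℕ) ≤ i := hh
    simp only [relatedBefore, mem_filter, mem_univ, true_and]
    exact ⟨hh.trans_lt hij, by omega⟩
  have hi := card_le_card hci
  have hj := card_le_card hcj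
  rw [Fin.card_Iio] at hi
  rw [Fin.card_Iic] at hj
  rw [indexFun_eq, indexFun_eq]
  omega

theorem lt_indexFun_add_indexFun {i j : Fin m} (hij : i < j)
    (hrel : lam i + lam j ≤ 2 * k + ((j : ℕ) - i)) :
    2 * n + 1 < indexFun n k m lam i + indexFun n k m lam j := by
  have hij' : (i : ℕ) < j := hij
  have hci := card_relatedBefore_le (k := k) lam i
  have hcj := card_relatedBefore_le (k := k) lam j
  rw [indexFun_eq, indexFun_eq]
  rcases le_or_gt (lam i + lam j) (2 * k) with hsmall | hlarge
  · omega
  -- Here `λ_j ≤ k`, and then `h` is related to `j` only for `h < j + 2k - λ_i - λ_j`.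
  have hkj : lam j ≤ k := by
    by_contra! hkj
    have := hlam.add_sub_le hij.le hkj
    omega
  let t : Fin m := ⟨(j : ℕ) + 2 * k - (lam i + lam j), by omega⟩
  have ht : (t : ℕ) = j + 2 * k - (lam i + lam j) := rfl
  have hlt : lam t ≤ lam i := hlam.1 (Fin.le_def.2 (by omega))
  have hcs : relatedBefore k lam j ⊆ Iio t := fun h hh => by
    simp only [relatedBefore, mem_filter, mem_univ, true_and] at hh
    rw [mem_Iio]
    by_contra! hth
    have hkh : k < lam h := by have : (h : ℕ) < j := hh.1; omega
    have := hlam.add_sub_le hth hkh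
    omega
  have := card_le_card hcs
  rw [Fin.card_Iio] at this
  omega

theorem indexFun_lt_indexFun_succ {u : Fin m} (hu : ¬IsMax u) :
    indexFun n k m lam u < indexFun n k m lam (Order.succ u) := by
  set v := Order.succ u
  have hv : (v : ℕ) = u + 1 := Fin.val_orderSucc_of_not_isMax hu
  have hvu : lam v ≤ lam u := hlam.1 (Order.le_succ u)
  have hsub : relatedBefore k lam v ⊆ insert u (relatedBefore k lam u) := fun h hh => by
    simp only [relatedBefore, mem_insert, mem_filter, mem_univ, true_and, Fin.lt_def,
      Fin.ext_iff] at hh ⊢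
    omega
  rw [indexFun_eq, indexFun_eq]
  rcases hvu.lt_or_eq with hlt | heq
  · have := (card_le_card hsub).trans (card_insert_le _ _)
    omega
  · have hku : lam u ≤ k := by
      by_contra! hku
      exact hlam.2.1 u v (Order.lt_succ_of_not_isMax hu).ne hku heq.symm
    have hu_not : u ∉ relatedBefore k lam v := by
      simp only [relatedBefore, mem_filter, mem_univ, true_and]
      omega
    have := card_le_card ((subset_insert_iff_of_notMem hu_not).1 hsub)
    omega

theorem strictMono_indexFun : StrictMono (indexFun n k m lam) :=
  strictMono_of_lt_succ fun _ hu => hlam.indexFun_lt_indexFun_succ hu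

theorem one_le_indexFun (j : Fin m) : 1 ≤ indexFun n k m lam j := by
  have := card_relatedBefore_le (k := k) lam j
  have := hlam.2.2 j
  rw [indexFun_eq]
  omega

theorem indexFun_add_indexFun_ne (i j : Fin m) :
    indexFun n k m lam i + indexFun n k m lam j ≠ 2 * n + 1 := by
  wlog hij : i < j generalizing i j
  · rcases (not_lt.1 hij).lt_or_eq with hji | rfl
    · rw [add_comm]
      exact this j i hji
    · omega
  by_cases hrel : 2 * k + ((j : ℕ) - i) < lam i + lam j
  · have := hlam.indexFun_add_indexFun_le hij hrel
    omega
  · have := hlam.lt_indexFun_add_indexFun hij (not_lt.1 hrel)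
    omega

theorem related_iff_indexFun_add_le {i j : Fin m} (hij : i < j) :
    2 * k + ((j : ℕ) - i) < lam i + lam j ↔ indexFun n k m lam i + indexFun n k m lam j ≤ 2 * n :=
  ⟨hlam.indexFun_add_indexFun_le hij, fun h => by
    by_contra! hrel
    have := hlam.lt_indexFun_add_indexFun hij hrel
    omega⟩

theorem relatedBefore_eq_lowSumBefore (j : Fin m) :
    relatedBefore k lam j = lowSumBefore n (indexFun n k m lam) j := by
  ext i
  simp only [relatedBefore, lowSumBefore, mem_filter, mem_univ, true_and]
  exact and_congr_right hlam.related_iff_indexFun_add_le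

theorem partOfIndex_indexFun (j : Fin m) : partOfIndex n k (indexFun n k m lam) j = lam j := by
  rw [partOfIndex, ← hlam.relatedBefore_eq_lowSumBefore, indexFun_eq]
  ring

end IsKStrictInRect

def highSumBefore (n : ℕ) (p : Fin m → ℤ) (j : Fin m) : Finset (Fin m) :=
  {i | i < j ∧ 2 * n < p i + p j}

theorem card_lowSumBefore_add_card_highSumBefore (p : Fin m → ℤ) (j : Fin m) :
    #(lowSumBefore n p j) + #(highSumBefore n p j) = j := by
  have hlow : lowSumBefore n p j = (Iio j).filter (fun i => p i + p j ≤ 2 * n) := by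
    ext; simp [lowSumBefore]
  have hhigh : highSumBefore n p j = (Iio j).filter (fun i => ¬p i + p j ≤ 2 * n) := by
    ext; simp [highSumBefore]
  rw [hlow, hhigh, card_filter_add_card_filter_not, Fin.card_Iio]

theorem partOfIndex_eq (p : Fin m → ℤ) (j : Fin m) :
    partOfIndex n k p j = n + k + 1 - p j + #(highSumBefore n p j) := by
  have := card_lowSumBefore_add_card_highSumBefore (n := n) p j
  rw [partOfIndex]
  omega

section IndexSide

variable {p : Fin m → ℤ}

theorem card_lowSumBefore_le (hp : StrictMono p) {i j : Fin m} (hle : p i + p j ≤ 2 * n) :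
    (#(lowSumBefore n p j) : ℤ) ≤ i + 1 + (2 * n - p i - p j) := by
  have hmaps : Set.MapsTo (fun h : Fin m => (h : ℤ)) (lowSumBefore n p j)
      (Icc 0 (i + (2 * n - p i - p j))) := fun h hh => by
    simp only [lowSumBefore, coe_filter, mem_univ, true_and, Set.mem_ofPred_eq] at hh
    simp only [coe_Icc, Set.mem_Icc, Nat.cast_nonneg, true_and]
    rcases le_or_gt h i with hhi | hih
    · have : (h : ℕ) ≤ i := hhi
      omega
    · have := Fin.sub_le_sub_of_strictMonoOn hih.le (hp.strictMonoOn _)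
      have := hp hh.1
      omega
  have := card_le_card_of_injOn _ hmaps fun a _ b _ hab => Fin.ext (by exact_mod_cast hab)
  rw [Int.card_Icc] at this
  omega

/-- Folding `x ↦ min x (2n + 1 - x)` is injective on the values of `p`, since no two of them sum
to `2n + 1`. -/
theorem card_highSumBefore_le (hp : StrictMono p) (havoid : ∀ i j, p i + p j ≠ 2 * n + 1)
    (j : Fin m) : (#(highSumBefore n p j) : ℤ) ≤ max 0 (p j - n - 1) := by
  let fold : Fin m → ℤ := fun h => min (p h) (2 * n + 1 - p h)
  have hmaps : Set.MapsTo fold (highSumBefore n p j) (Icc (2 * n + 2 - p j) n) := fun h hh => by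
    simp only [highSumBefore, coe_filter, mem_univ, true_and, Set.mem_ofPred_eq] at hh
    have := hp hh.1
    have := havoid h j
    simp only [fold, coe_Icc, Set.mem_Icc]
    omega
  have hinj : Set.InjOn fold (highSumBefore n p j) := fun a _ b _ hab => by
    have := havoid a b
    have : p a = p b := by simp only [fold] at hab; omega
    exact hp.injective this
  have := card_le_card_of_injOn fold hmaps hinj
  rw [Int.card_Icc] at this
  omega

theorem card_highSumBefore_le_of_lt (hp : StrictMono p) (havoid : ∀ i j, p i + p j ≠ 2 * n + 1)
    {i j : Fin m} (hij : i < j) :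
    (#(highSumBefore n p j) : ℤ) ≤ max 0 (p i + p j - 2 * n - 1) + ((j : ℤ) - i - 1) := by
  have hsplit := card_filter_add_card_filter_not (s := highSumBefore n p j) (· ≤ i)
  have hlow : Set.MapsTo p ((highSumBefore n p j).filter (· ≤ i)) (Icc (2 * n + 2 - p j) (p i)) :=
    fun h hh => by
      simp only [highSumBefore, filter_filter, coe_filter, mem_univ, true_and,
        Set.mem_ofPred_eq] at hh
      have := hp.monotone hh.2
      have := havoid h j
      simp only [coe_Icc, Set.mem_Icc]
      omega
  have hhigh : (highSumBefore n p j).filter (¬· ≤ i) ⊆ Ioo i j := fun h hh => by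
    simp only [highSumBefore, filter_filter, mem_filter, mem_univ, true_and, not_le] at hh
    exact mem_Ioo.2 ⟨hh.2, hh.1.1⟩
  have h1 := card_le_card_of_injOn p hlow hp.injective.injOn
  have h2 := card_le_card hhigh
  rw [Int.card_Icc] at h1
  rw [Fin.card_Ioo] at h2
  have : (i : ℕ) < j := hij
  omega

theorem card_lowSumBefore_le_succ (hp : StrictMono p) (havoid : ∀ i j, p i + p j ≠ 2 * n + 1)
    {u : Fin m} (hu : ¬IsMax u) :
    (#(lowSumBefore n p u) : ℤ) + (if p u + p (Order.succ u) ≤ 2 * n then 1 else 0) ≤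
      #(lowSumBefore n p (Order.succ u)) + (p (Order.succ u) - p u - 1) := by
  set v := Order.succ u
  have huv : u < v := Order.lt_succ_of_not_isMax hu
  let L : Finset (Fin m) := {h | h < u ∧ p h + p u ≤ 2 * n ∧ 2 * n < p h + p v}
  have hL : Set.MapsTo p L (Icc (2 * n + 2 - p v) (2 * n - p u)) := fun h hh => by
    simp only [L, coe_filter, mem_univ, true_and, Set.mem_ofPred_eq] at hh
    have := havoid h v
    simp only [coe_Icc, Set.mem_Icc]
    omega
  have hcardL := card_le_card_of_injOn p hL hp.injective.injOn
  rw [Int.card_Icc] at hcardL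
  have hsub : lowSumBefore n p u ⊆ lowSumBefore n p v ∪ L := fun h hh => by
    simp only [lowSumBefore, L, mem_union, mem_filter, mem_univ, true_and] at hh ⊢
    rcases le_or_gt (p h + p v) (2 * n) with hv | hv
    · exact .inl ⟨hh.1.trans huv, hv⟩
    · exact .inr ⟨hh.1, hh.2, hv⟩
  have hpuv := hp huv
  split_ifs with hcond
  · have hu_low : u ∈ lowSumBefore n p v := by simp [lowSumBefore, huv, hcond]
    have hu_not : u ∉ lowSumBefore n p u := by simp [lowSumBefore]
    have := (card_le_card (insert_subset (mem_union_left _ hu_low) hsub)).trans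
      (card_union_le _ _)
    rw [card_insert_of_notMem hu_not] at this
    omega
  · have := (card_le_card hsub).trans (card_union_le _ _)
    omega

theorem partOfIndex_succ_le (hp : StrictMono p) (havoid : ∀ i j, p i + p j ≠ 2 * n + 1)
    {u : Fin m} (hu : ¬IsMax u) : partOfIndex n k p (Order.succ u) ≤ partOfIndex n k p u := by
  have := card_lowSumBefore_le_succ hp havoid hu
  have := Fin.val_orderSucc_of_not_isMax hu
  rw [partOfIndex, partOfIndex]
  split_ifs at * <;> omega

theorem antitone_partOfIndex (hp : StrictMono p) (havoid : ∀ i j, p i + p j ≠ 2 * n + 1) :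
    Antitone (partOfIndex n k p) :=
  antitone_of_succ_le fun _ hu => partOfIndex_succ_le hp havoid hu

theorem lt_partOfIndex_add_partOfIndex (hp : StrictMono p) {i j : Fin m}
    (hle : p i + p j ≤ 2 * n) :
    2 * k + ((j : ℤ) - i) < partOfIndex n k p i + partOfIndex n k p j := by
  have := card_lowSumBefore_le hp hle
  have := card_lowSumBefore_add_card_highSumBefore (n := n) p i
  rw [partOfIndex, partOfIndex]
  omega

theorem partOfIndex_add_partOfIndex_le (hp : StrictMono p)
    (havoid : ∀ i j, p i + p j ≠ 2 * n + 1) {i j : Fin m} (hij : i < j)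
    (hgt : 2 * n < p i + p j) :
    partOfIndex n k p i + partOfIndex n k p j ≤ 2 * k + ((j : ℤ) - i) := by
  have := hp hij
  have := card_highSumBefore_le hp havoid i
  have := card_highSumBefore_le hp havoid j
  have := card_highSumBefore_le_of_lt hp havoid hij
  rw [partOfIndex_eq, partOfIndex_eq]
  omega

theorem partOfIndex_succ_lt (hp : StrictMono p) (havoid : ∀ i j, p i + p j ≠ 2 * n + 1)
    {u : Fin m} (hu : ¬IsMax u) (hk : k < partOfIndex n k p u) :
    partOfIndex n k p (Order.succ u) < partOfIndex n k p u := by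
  have hcount := card_lowSumBefore_le_succ hp havoid hu
  have hv := Fin.val_orderSucc_of_not_isMax hu
  split_ifs at hcount with hcond
  · rw [partOfIndex, partOfIndex]
    omega
  · have := partOfIndex_add_partOfIndex_le (k := k) hp havoid (Order.lt_succ_of_not_isMax hu)
      (not_le.1 hcond)
    have := partOfIndex_succ_le (k := k) hp havoid hu
    omega

theorem partOfIndex_lt_of_lt (hp : StrictMono p) (havoid : ∀ i j, p i + p j ≠ 2 * n + 1)
    {i j : Fin m} (hij : i < j) (hk : k < partOfIndex n k p i) :
    partOfIndex n k p j < partOfIndex n k p i :=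
  (antitone_partOfIndex hp havoid (Order.succ_le_of_lt hij)).trans_lt
    (partOfIndex_succ_lt hp havoid (not_isMax_of_lt hij) hk)

theorem partOfIndex_le (hp : StrictMono p) (havoid : ∀ i j, p i + p j ≠ 2 * n + 1)
    (hpos : ∀ j, 1 ≤ p j) (j : Fin m) : partOfIndex n k p j ≤ n + k := by
  have := card_highSumBefore_le hp havoid j
  have := hpos j
  rw [partOfIndex_eq]
  omega

theorem partOfIndex_nonneg (hp : StrictMono p) (havoid : ∀ i j, p i + p j ≠ 2 * n + 1)
    (hbound : ∀ j, 1 ≤ p j ∧ p j ≤ 2 * n) (hm : n - k ≤ m) (j : Fin m) :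
    0 ≤ partOfIndex n k p j := by
  let l : Fin m := ⟨m - 1, by have := j.isLt; omega⟩
  have hmaps : Set.MapsTo p (lowSumBefore n p l) (Icc 1 (2 * n - p l)) := fun h hh => by
    simp only [lowSumBefore, coe_filter, mem_univ, true_and, Set.mem_ofPred_eq] at hh
    have := hbound h
    simp only [coe_Icc, Set.mem_Icc]
    omega
  have hcard := card_le_card_of_injOn p hmaps hp.injective.injOn
  rw [Int.card_Icc] at hcard
  have hl : (l : ℕ) = m - 1 := rfl
  have := hbound l
  have := j.isLt
  refine le_trans ?_ (antitone_partOfIndex hp havoid (Fin.le_def.2 (by omega) : j ≤ l))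
  rw [partOfIndex]
  omega

theorem isKStrictInRect_partOfIndex (hp : StrictMono p) (havoid : ∀ i j, p i + p j ≠ 2 * n + 1)
    (hbound : ∀ j, 1 ≤ p j ∧ p j ≤ 2 * n) (hm : n - k ≤ m) :
    IsKStrictInRect n k m fun j => (partOfIndex n k p j).toNat := by
  have hnonneg := partOfIndex_nonneg (k := k) hp havoid hbound hm
  refine ⟨fun i j hij => Int.toNat_le_toNat (antitone_partOfIndex hp havoid hij), ?_,
    fun j => by
      have := partOfIndex_le (k := k) hp havoid (fun j => (hbound j).1) j
      simp only
      omega⟩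
  intro i j hne hk
  simp only at hk ⊢
  rcases hne.lt_or_gt with hij | hji
  · have := partOfIndex_lt_of_lt (k := k) hp havoid hij (by omega)
    omega
  · have := antitone_partOfIndex (k := k) hp havoid hji.le
    have := partOfIndex_lt_of_lt (k := k) hp havoid hji (by omega)
    omega

theorem indexFun_partOfIndex (hp : StrictMono p) (havoid : ∀ i j, p i + p j ≠ 2 * n + 1)
    (hnonneg : ∀ j, 0 ≤ partOfIndex n k p j) :
    indexFun n k m (fun j => (partOfIndex n k p j).toNat) = p := by
  funext j
  have hrel : relatedBefore k (fun j => (partOfIndex n k p j).toNat) j = lowSumBefore n p j := by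
    ext h
    simp only [relatedBefore, lowSumBefore, mem_filter, mem_univ, true_and]
    refine and_congr_right fun hhj => ⟨fun hrel => ?_, fun hle => ?_⟩
    · by_contra! hgt
      have := partOfIndex_add_partOfIndex_le (k := k) hp havoid hhj hgt
      have := hnonneg h
      have := hnonneg j
      omega
    · have := lt_partOfIndex_add_partOfIndex (k := k) hp hle
      have := hnonneg h
      have := hnonneg j
      omega
  have := hnonneg j
  rw [indexFun_eq, hrel, partOfIndex] at *
  omega

end IndexSide

theorem mapsTo_image_indexFun (hm : m ≤ n - k) :
    Set.MapsTo (fun lam => image (indexFun n k m lam) univ) {lam | IsKStrictInRect n k m lam}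
      {P | IsIndexSet n m P} := by
  intro lam hlam
  refine ⟨by rw [card_image_of_injective _ hlam.strictMono_indexFun.injective, card_univ,
    Fintype.card_fin], ?_, ?_⟩
  · simp only [mem_image, mem_univ, true_and, forall_exists_index, forall_apply_eq_imp_iff]
    exact fun j => ⟨hlam.one_le_indexFun j, indexFun_le_two_mul hm lam j⟩
  · simp only [mem_image, mem_univ, true_and, forall_exists_index, forall_apply_eq_imp_iff]
    exact hlam.indexFun_add_indexFun_ne

theorem injOn_image_indexFun :
    Set.InjOn (fun lam => image (indexFun n k m lam) univ) {lam | IsKStrictInRect n k m lam} := by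
  intro lam hlam mu hmu himage
  have hrange : Set.range (indexFun n k m lam) = Set.range (indexFun n k m mu) := by
    simpa only [coe_image, coe_univ, Set.image_univ] using congrArg ((↑) : Finset ℤ → Set ℤ) himage
  have hindex := (hlam.strictMono_indexFun.range_inj hmu.strictMono_indexFun).1 hrange
  funext j
  have := congrArg (partOfIndex n k · j) hindex
  simp only [hlam.partOfIndex_indexFun, hmu.partOfIndex_indexFun] at this
  exact_mod_cast this

theorem surjOn_image_indexFun (hm : n - k ≤ m) :
    Set.SurjOn (fun lam => image (indexFun n k m lam) univ) {lam | IsKStrictInRect n k m lam}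
      {P | IsIndexSet n m P} := by
  rintro P ⟨hcard, hbound, havoid⟩
  set p : Fin m → ℤ := fun j => P.orderEmbOfFin hcard j
  have hp : StrictMono p := (P.orderEmbOfFin hcard).strictMono
  have hpP : ∀ j, p j ∈ P := P.orderEmbOfFin_mem hcard
  have hbound' : ∀ j, 1 ≤ p j ∧ p j ≤ 2 * n := fun j => hbound _ (hpP j)
  have havoid' : ∀ i j, p i + p j ≠ 2 * n + 1 := fun i j => havoid _ (hpP i) _ (hpP j)
  refine ⟨_, isKStrictInRect_partOfIndex (k := k) hp havoid' hbound' hm, ?_⟩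
  simp only
  rw [indexFun_partOfIndex hp havoid' (partOfIndex_nonneg hp havoid' hbound' hm)]
  exact P.image_orderEmbOfFin_univ hcard

end

theorem kStrict_indexSet_bijection_general (n k : ℕ) :
    (∀ lam : Fin (n - k) → ℕ, IsKStrictInRect n k (n - k) lam →
      StrictMono (indexFun n k (n - k) lam) ∧
        ∀ j, 1 ≤ indexFun n k (n - k) lam j ∧
          indexFun n k (n - k) lam j ≤ 2 * (n : ℤ)) ∧
    Set.BijOn
      (fun lam : Fin (n - k) → ℕ => Finset.image (indexFun n k (n - k) lam) Finset.univ)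
      {lam | IsKStrictInRect n k (n - k) lam}
      {P | IsIndexSet n (n - k) P} :=
  ⟨fun lam hlam => ⟨hlam.strictMono_indexFun,
      fun j => ⟨hlam.one_le_indexFun j, indexFun_le_two_mul le_rfl lam j⟩⟩,
    mapsTo_image_indexFun le_rfl, injOn_image_indexFun, surjOn_image_indexFun le_rfl⟩

/-- for a `k`-strict partition `λ` fitting in the
`(n−k) × (n+k)` rectangle, the values `p_j(λ)` are strictly increasing and lie
in `{1,…,2n}`, and `λ ↦ {p_1(λ),…,p_m(λ)}` is a bijection from such `k`-strict
partitions onto index sets. -/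
theorem kStrict_indexSet_bijection (n k : ℕ) (hn : 1 ≤ n) (hk : k ≤ n - 1) :
    (∀ lam : Fin (n - k) → ℕ, IsKStrictInRect n k (n - k) lam →
      StrictMono (indexFun n k (n - k) lam) ∧
        ∀ j, 1 ≤ indexFun n k (n - k) lam j ∧
          indexFun n k (n - k) lam j ≤ 2 * (n : ℤ)) ∧
    Set.BijOn
      (fun lam : Fin (n - k) → ℕ => Finset.image (indexFun n k (n - k) lam) Finset.univ)
      {lam | IsKStrictInRect n k (n - k) lam}
      {P | IsIndexSet n (n - k) P} :=
  kStrict_indexSet_bijection_general n k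
end

section
/- Let V = ℂ^N be equipped with a nondegenerate bilinear form (·,·) that is either symmetric or alternating. Let 0 = F_0 ⊂ F_1 ⊂ ⋯ ⊂ F_N = V be an isotropic flag, i.e. a complete flag such that F_i = F_j^⊥ whenever i + j = N, where ⊥ denotes orthogonal complement with respect to the form. Let Σ ⊆ V be an isotropic subspace (the form vanishes identically on Σ). Then for all i, j in the index set 𝒫(Σ) of Σ relative to F_•, one has i + j ≠ N + 1. -/
/-!
Suppose `p + q = N + 1`, with `x ∈ Σ ∩ F_p \ F_{p-1}` and `y ∈ Σ ∩ F_q \ F_{q-1}`. Isotropy of the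
flag gives `F_{p-1} = F_q^⊥` and `F_{q-1} = F_p^⊥`, so `x` pairs nontrivially with `F_q`, and the
hyperplane `H = F_q ∩ ker (x, ·)` of `F_q` contains `F_{q-1} = F_p^⊥`. Since `Σ` is isotropic,
`y ∈ H \ F_{q-1}`, so `F_{q-1} < H < F_q`, impossible as `F_{q-1}` has codimension one in `F_q`.
-/

namespace LinearMap.BilinForm

variable {K V : Type*} [Field K] [AddCommGroup V] [Module K V] {B : LinearMap.BilinForm K V}
  {P Q : Submodule K V} {x y : V}

theorem inf_ker_lt_of_notMem_orthogonal (hB : B.IsRefl) (hx : x ∉ B.orthogonal Q) :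
    Q ⊓ LinearMap.ker (B x) < Q :=
  inf_lt_left.mpr fun hQ => hx fun _ hn => hB _ _ (hQ hn)

theorem orthogonal_lt_inf_ker (hPQ : B.orthogonal P ≤ Q) (hx : x ∈ P) (hy : y ∈ Q)
    (hyP : y ∉ B.orthogonal P) (hxy : B x y = 0) :
    B.orthogonal P < Q ⊓ LinearMap.ker (B x) :=
  SetLike.lt_iff_le_and_exists.mpr
    ⟨fun _ hm => Submodule.mem_inf.mpr ⟨hPQ hm, hm x hx⟩, y, Submodule.mem_inf.mpr ⟨hy, hxy⟩, hyP⟩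

theorem finrank_orthogonal_add_two_le [FiniteDimensional K V] (hB : B.IsRefl)
    (hPQ : B.orthogonal P ≤ Q) (hx : x ∈ P) (hxQ : x ∉ B.orthogonal Q) (hy : y ∈ Q)
    (hyP : y ∉ B.orthogonal P) (hxy : B x y = 0) :
    Module.finrank K (B.orthogonal P) + 2 ≤ Module.finrank K Q := by
  have h₁ := Submodule.finrank_lt_finrank_of_lt (orthogonal_lt_inf_ker hPQ hx hy hyP hxy)
  have h₂ := Submodule.finrank_lt_finrank_of_lt (inf_ker_lt_of_notMem_orthogonal hB hxQ)
  omega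

end LinearMap.BilinForm

theorem isotropic_indexSet_no_complementary_pairs_general (N : ℕ)
    (B : LinearMap.BilinForm ℂ (Fin N → ℂ))
    (hsa : B.IsSymm ∨ B.IsAlt)
    (F : ℕ → Submodule ℂ (Fin N → ℂ))
    (hmono : ∀ i j : ℕ, i ≤ j → j ≤ N → F i ≤ F j)
    (hrank : ∀ i : ℕ, i ≤ N → Module.finrank ℂ (F i) = i)
    (hperp : ∀ i j : ℕ, i ≤ N → j ≤ N → i + j = N →
      F i = B.orthogonal (F j))
    (S : Submodule ℂ (Fin N → ℂ))
    (hiso : ∀ x ∈ S, ∀ y ∈ S, B x y = 0) :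
    ∀ p q : ℕ, 1 ≤ p → p ≤ N → 1 ≤ q → q ≤ N →
      S ⊓ F (p - 1) < S ⊓ F p → S ⊓ F (q - 1) < S ⊓ F q →
      p + q ≠ N + 1 := by
  intro p q hp₁ hpN hq₁ hqN hjump_p hjump_q hpq
  have hrefl : B.IsRefl := hsa.elim (·.isRefl) (·.isRefl)
  obtain ⟨x, ⟨hxS, hxF⟩, hx_old⟩ := SetLike.exists_of_lt hjump_p
  obtain ⟨y, ⟨hyS, hyF⟩, hy_old⟩ := SetLike.exists_of_lt hjump_q
  have hFp : F (p - 1) = B.orthogonal (F q) := hperp _ _ (by omega) hqN (by omega)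
  have hFq : F (q - 1) = B.orthogonal (F p) := hperp _ _ (by omega) hpN (by omega)
  have hx_perp : x ∉ B.orthogonal (F q) := hFp ▸ fun hx => hx_old ⟨hxS, hx⟩
  have hy_perp : y ∉ B.orthogonal (F p) := hFq ▸ fun hy => hy_old ⟨hyS, hy⟩
  have hdim := B.finrank_orthogonal_add_two_le hrefl (hFq ▸ hmono _ _ (by omega) hqN)
    hxF hx_perp hyF hy_perp (hiso x hxS y hyS)
  rw [← hFq, hrank _ (by omega), hrank _ hqN] at hdim
  omega

/-- Let `V = ℂ^N` carry a nondegenerate symmetric or alternating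
bilinear form, let `F_0 ⊂ F_1 ⊂ ⋯ ⊂ F_N = V` be an isotropic flag
(`F_i = F_j^⊥` whenever `i + j = N`), and let `Σ` be an isotropic subspace.
Then any two members `p, q` of the index set of `Σ` satisfy `p + q ≠ N + 1`. -/
theorem isotropic_indexSet_no_complementary_pairs (N : ℕ)
    (B : LinearMap.BilinForm ℂ (Fin N → ℂ))
    (hB : B.Nondegenerate) (hsa : B.IsSymm ∨ B.IsAlt)
    (F : ℕ → Submodule ℂ (Fin N → ℂ))
    (hmono : ∀ i j : ℕ, i ≤ j → j ≤ N → F i ≤ F j)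
    (hrank : ∀ i : ℕ, i ≤ N → Module.finrank ℂ (F i) = i)
    (hperp : ∀ i j : ℕ, i ≤ N → j ≤ N → i + j = N →
      F i = B.orthogonal (F j))
    (S : Submodule ℂ (Fin N → ℂ))
    (hiso : ∀ x ∈ S, ∀ y ∈ S, B x y = 0) :
    ∀ p q : ℕ, 1 ≤ p → p ≤ N → 1 ≤ q → q ≤ N →
      S ⊓ F (p - 1) < S ⊓ F p → S ⊓ F (q - 1) < S ⊓ F q →
      p + q ≠ N + 1 :=
  isotropic_indexSet_no_complementary_pairs_general N B hsa F hmono hrank hperp S hiso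
end

section
/- Let V be a 2n-dimensional complex vector space with a nondegenerate symmetric bilinear form, let H ⊂ V be a hyperplane on which the restriction of the form is nondegenerate, and fix a maximal (i.e. n-dimensional) isotropic subspace L of V. Then the map Σ ↦ Σ ∩ H is a bijection from the set of n-dimensional isotropic subspaces Σ of V in the same family as L, i.e. those with dim(Σ ∩ L) ≡ n (mod 2), onto the set of (n−1)-dimensional isotropic subspaces of H. In particular, for every such Σ one has dim(Σ ∩ H) = n − 1. -/
/-!
An `n`-dimensional isotropic `Σ` is not contained in `H`, since the nondegenerate
`(2n-1)`-dimensional `H` has no `n`-dimensional isotropic subspace; so `dim (Σ ∩ H) = n - 1`.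
Conversely, over an algebraically closed field an isotropic `T` of dimension `n - 1` is the
intersection of two maximal isotropic subspaces `Σ₁, Σ₂` (they come from the two isotropic lines
of the plane `T^⊥ / T`). Two maximal isotropic subspaces meeting in codimension one lie in opposite
families: every isotropic vector of `T^⊥ = Σ₁ + Σ₂` lies in `Σ₁` or in `Σ₂`, so
`(Σ₁ ∩ L) + (Σ₂ ∩ L) = T^⊥ ∩ L`, which has dimension `dim (T ∩ L) + 1`. Hence exactly one of
`Σ₁, Σ₂` is in the family of `L` (surjectivity), and two members of that family with the same
trace on `H` would meet in codimension one (injectivity).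
-/

open Module Submodule

theorem Submodule.finrank_inf_add_one_of_inf_eq {K V : Type*} [Field K] [AddCommGroup V]
    [Module K V] [FiniteDimensional K V] {S₁ S₂ H : Submodule K V} (hne : S₁ ≠ S₂)
    (hrank : finrank K S₁ = finrank K S₂) (hH : finrank K ↥(S₁ ⊓ H) + 1 = finrank K S₁)
    (h : S₁ ⊓ H = S₂ ⊓ H) : finrank K ↥(S₁ ⊓ S₂) + 1 = finrank K S₁ := by
  have hle : S₁ ⊓ H ≤ S₁ ⊓ S₂ := le_inf inf_le_left (h ▸ inf_le_left)
  have hlt : S₁ ⊓ S₂ < S₁ := lt_of_le_of_ne inf_le_left fun h₁₂ =>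
    hne (eq_of_le_of_finrank_eq (h₁₂ ▸ inf_le_right) hrank)
  have := finrank_mono hle
  have := finrank_lt_finrank_of_lt hlt
  omega

namespace LinearMap.BilinForm

variable {K V : Type*} [Field K] [AddCommGroup V] [Module K V] {B : LinearMap.BilinForm K V}

def IsIsotropic (B : LinearMap.BilinForm K V) (S : Submodule K V) : Prop :=
  ∀ x ∈ S, ∀ y ∈ S, B x y = 0

theorem IsIsotropic.le_orthogonal {S : Submodule K V} (hS : B.IsIsotropic S) :
    S ≤ B.orthogonal S :=
  fun x hx y hy => hS y hy x hx

theorem IsIsotropic.mono {S T : Submodule K V} (hS : B.IsIsotropic S) (hTS : T ≤ S) :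
    B.IsIsotropic T :=
  fun x hx y hy => hS x (hTS hx) y (hTS hy)

theorem isIsotropic_of_orthogonal_eq_self {S : Submodule K V} (hS : B.orthogonal S = S) :
    B.IsIsotropic S :=
  fun x hx y hy => (hS.symm ▸ hy : y ∈ B.orthogonal S) x hx

theorem isIsotropic_sup_span_singleton (hrefl : B.IsRefl) {T : Submodule K V}
    (hT : B.IsIsotropic T) {x : V} (hxT : x ∈ B.orthogonal T) (hx : B x x = 0) :
    B.IsIsotropic (T ⊔ K ∙ x) := by
  rintro _ ha _ hb
  obtain ⟨t, ht, _, hc, rfl⟩ := mem_sup.1 ha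
  obtain ⟨c, rfl⟩ := mem_span_singleton.1 hc
  obtain ⟨t', ht', _, hc', rfl⟩ := mem_sup.1 hb
  obtain ⟨c', rfl⟩ := mem_span_singleton.1 hc'
  simp [hT t ht t' ht', hxT t ht, hrefl _ _ (hxT t' ht'), hx]

theorem orthogonal_sup (S T : Submodule K V) :
    B.orthogonal (S ⊔ T) = B.orthogonal S ⊓ B.orthogonal T := by
  refine le_antisymm (le_inf (orthogonal_le le_sup_left) (orthogonal_le le_sup_right)) ?_
  rintro x ⟨hS, hT⟩ _ hy
  obtain ⟨s, hs, t, ht, rfl⟩ := mem_sup.1 hy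
  simp [hS s hs, hT t ht]

section FiniteDimensional

variable [FiniteDimensional K V]

theorem two_mul_finrank_of_orthogonal_eq_self (hB : B.Nondegenerate) {S : Submodule K V}
    (hS : B.orthogonal S = S) : 2 * finrank K S = finrank K V := by
  have h := finrank_orthogonal hB S
  rw [hS] at h
  have := S.finrank_le
  omega

theorem IsIsotropic.two_mul_finrank_le (hB : B.Nondegenerate) {S : Submodule K V}
    (hS : B.IsIsotropic S) : 2 * finrank K S ≤ finrank K V := by
  have h := finrank_orthogonal hB S
  have := finrank_mono hS.le_orthogonal
  have := S.finrank_le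
  omega

theorem IsIsotropic.orthogonal_eq_self (hB : B.Nondegenerate) {S : Submodule K V}
    (hS : B.IsIsotropic S) (hSV : 2 * finrank K S = finrank K V) : B.orthogonal S = S := by
  refine (eq_of_le_of_finrank_eq hS.le_orthogonal ?_).symm
  rw [finrank_orthogonal hB]
  omega

theorem IsIsotropic.finrank_inf_add_one {S H : Submodule K V} (hS : B.IsIsotropic S)
    (hSV : 2 * finrank K S = finrank K V) (hHV : finrank K H + 1 = finrank K V)
    (hBH : (B.restrict H).Nondegenerate) : finrank K ↥(S ⊓ H) + 1 = finrank K S := by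
  have hSH : ¬ S ≤ H := fun hSH => by
    have hS' : (B.restrict H).IsIsotropic (S.comap H.subtype) :=
      fun x hx y hy => hS x hx y hy
    have := hS'.two_mul_finrank_le hBH
    rw [(comapSubtypeEquivOfLe hSH).finrank_eq] at this
    omega
  have hsup : finrank K H < finrank K ↥(S ⊔ H) :=
    finrank_lt_finrank_of_lt (lt_of_le_of_ne le_sup_right fun h => hSH (h ▸ le_sup_left))
  have := finrank_sup_add_finrank_inf_eq S H
  have := (S ⊔ H).finrank_le
  omega

theorem finrank_orthogonal_inf_add_finrank (hB : B.Nondegenerate) (hrefl : B.IsRefl)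
    {L : Submodule K V} (hL : B.orthogonal L = L) (W : Submodule K V) :
    finrank K ↥(B.orthogonal W ⊓ L) + finrank K W = finrank K ↥(W ⊓ L) + finrank K L := by
  have hperp : B.orthogonal (B.orthogonal W ⊔ L) = W ⊓ L := by
    rw [orthogonal_sup, hL, orthogonal_orthogonal hB hrefl]
  have h₁ := finrank_orthogonal hB (B.orthogonal W ⊔ L)
  rw [hperp] at h₁
  have h₂ := finrank_orthogonal hB W
  have := finrank_sup_add_finrank_inf_eq (B.orthogonal W) L
  have := (B.orthogonal W ⊔ L).finrank_le
  have := W.finrank_le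
  omega

theorem mem_of_apply_eq_zero_of_notMem {M₁ M₂ : Submodule K V} (hM₁ : B.orthogonal M₁ = M₁)
    (hM₂ : B.IsIsotropic M₂) (h₁₂ : finrank K ↥(M₁ ⊓ M₂) + 1 = finrank K M₁)
    {u v : V} (hu : u ∈ M₁) (hu₂ : u ∉ M₂) (hv : v ∈ M₂) (huv : B u v = 0) : v ∈ M₁ := by
  have hM₁u : M₁ ⊓ M₂ ⊔ K ∙ u = M₁ := by
    refine eq_of_le_of_finrank_eq (sup_le inf_le_left ((span_singleton_le_iff_mem _ _).2 hu)) ?_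
    rw [finrank_sup_span_singleton fun h => hu₂ (mem_inf.1 h).2, h₁₂]
  have hv₁ : v ∈ B.orthogonal (M₁ ⊓ M₂ ⊔ K ∙ u) := by
    rw [orthogonal_sup]
    refine ⟨fun t ht => hM₂ t ht.2 v hv, fun w hw => ?_⟩
    obtain ⟨c, rfl⟩ := mem_span_singleton.1 hw
    simp [huv]
  rwa [hM₁u, hM₁] at hv₁

theorem mem_or_mem_of_mem_sup [NeZero (2 : K)] (hsymm : B.IsSymm) {M₁ M₂ : Submodule K V}
    (hM₁ : B.orthogonal M₁ = M₁) (hM₂ : B.orthogonal M₂ = M₂)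
    (h₁₂ : finrank K ↥(M₁ ⊓ M₂) + 1 = finrank K M₁) {x : V} (hx : x ∈ M₁ ⊔ M₂)
    (hxx : B x x = 0) : x ∈ M₁ ∨ x ∈ M₂ := by
  obtain ⟨u, hu, v, hv, rfl⟩ := mem_sup.1 hx
  have huv : B u v = 0 := by
    have h₁ := isIsotropic_of_orthogonal_eq_self hM₁ u hu u hu
    have h₂ := isIsotropic_of_orthogonal_eq_self hM₂ v hv v hv
    simp only [map_add, LinearMap.add_apply, h₁, h₂, hsymm.eq v u] at hxx
    have h₂uv : (2 : K) * B u v = 0 := by linear_combination hxx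
    exact (mul_eq_zero.1 h₂uv).resolve_left two_ne_zero
  by_cases hu₂ : u ∈ M₂
  · exact Or.inr (add_mem hu₂ hv)
  · exact Or.inl (add_mem hu (mem_of_apply_eq_zero_of_notMem hM₁
      (isIsotropic_of_orthogonal_eq_self hM₂) h₁₂ hu hu₂ hv huv))

theorem finrank_inf_add_finrank_inf_eq [NeZero (2 : K)] (hB : B.Nondegenerate) (hsymm : B.IsSymm)
    {L M₁ M₂ : Submodule K V} (hL : B.orthogonal L = L) (hM₁ : B.orthogonal M₁ = M₁)
    (hM₂ : B.orthogonal M₂ = M₂) (h₁₂ : finrank K ↥(M₁ ⊓ M₂) + 1 = finrank K M₁) :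
    finrank K ↥(M₁ ⊓ L) + finrank K ↥(M₂ ⊓ L) = 2 * finrank K ↥(M₁ ⊓ M₂ ⊓ L) + 1 := by
  have hperp : B.orthogonal (M₁ ⊓ M₂) = M₁ ⊔ M₂ := by
    conv_lhs => rw [← hM₁, ← hM₂, ← orthogonal_sup, orthogonal_orthogonal hB hsymm.isRefl]
  have hsup : M₁ ⊓ L ⊔ M₂ ⊓ L = B.orthogonal (M₁ ⊓ M₂) ⊓ L := by
    rw [hperp]
    refine le_antisymm (sup_le (inf_le_inf_right L le_sup_left)
      (inf_le_inf_right L le_sup_right)) ?_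
    rintro x ⟨hx, hxL⟩
    rcases mem_or_mem_of_mem_sup hsymm hM₁ hM₂ h₁₂ hx
      (isIsotropic_of_orthogonal_eq_self hL x hxL x hxL) with h | h
    · exact mem_sup_left ⟨h, hxL⟩
    · exact mem_sup_right ⟨h, hxL⟩
  have hinf : M₁ ⊓ L ⊓ (M₂ ⊓ L) = M₁ ⊓ M₂ ⊓ L := (inf_inf_distrib_right _ _ _).symm
  have h := finrank_sup_add_finrank_inf_eq (M₁ ⊓ L) (M₂ ⊓ L)
  rw [hsup, hinf] at h
  have := finrank_orthogonal_inf_add_finrank hB hsymm.isRefl hL (M₁ ⊓ M₂)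
  have := two_mul_finrank_of_orthogonal_eq_self hB hL
  have := two_mul_finrank_of_orthogonal_eq_self hB hM₁
  omega

end FiniteDimensional

theorem exists_apply_add_smul_self_eq_zero [IsAlgClosed K] [NeZero (2 : K)] {e : V}
    (he : B e e ≠ 0) (f : V) : ∃ s : K, B (f + s • e) (f + s • e) = 0 := by
  obtain ⟨s, hs⟩ := exists_quadratic_eq_zero he
    (IsAlgClosed.exists_eq_mul_self (discrim (B e e) (B e f + B f e) (B f f)))
  refine ⟨s, ?_⟩
  simp only [map_add, map_smul, LinearMap.add_apply, LinearMap.smul_apply, smul_eq_mul]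
  linear_combination hs

theorem exists_mem_notMem_apply_self_eq_zero_of_orthogonal_eq_self [NeZero (2 : K)]
    (hsymm : B.IsSymm) {S W : Submodule K V} (hS : B.orthogonal S = S) (hSW : S < W) :
    ∃ x ∈ W, x ∉ S ∧ B x x = 0 := by
  obtain ⟨y, hyW, hyS⟩ := SetLike.exists_of_lt hSW
  obtain ⟨e, heS, hey⟩ : ∃ e ∈ S, B e y ≠ 0 := by
    rw [← hS, mem_orthogonal_iff] at hyS
    push Not at hyS
    exact hyS
  have hee : B e e = 0 := isIsotropic_of_orthogonal_eq_self hS e heS e heS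
  set c := B y y / (2 * B e y)
  refine ⟨y - c • e, sub_mem hyW (W.smul_mem c (hSW.le heS)), fun h => hyS ?_, ?_⟩
  · simpa using add_mem h (S.smul_mem c heS)
  · simp only [map_sub, map_smul, LinearMap.sub_apply, LinearMap.smul_apply, smul_eq_mul, hee,
      hsymm.eq y e, c]
    field_simp
    ring

variable [FiniteDimensional K V]

theorem exists_mem_notMem_apply_self_eq_zero [IsAlgClosed K] [NeZero (2 : K)]
    {U W : Submodule K V} (hUW : finrank K U + 2 ≤ finrank K W) :
    ∃ x ∈ W, x ∉ U ∧ B x x = 0 := by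
  obtain ⟨e, heW, heU⟩ := SetLike.not_le_iff_exists.1 fun hWU : W ≤ U => by
    have := finrank_mono hWU
    omega
  by_cases he : B e e = 0
  · exact ⟨e, heW, heU, he⟩
  obtain ⟨f, hfW, hfUe⟩ := SetLike.not_le_iff_exists.1 fun hWU : W ≤ U ⊔ K ∙ e => by
    have := finrank_mono hWU
    rw [finrank_sup_span_singleton heU] at this
    omega
  obtain ⟨s, hs⟩ := exists_apply_add_smul_self_eq_zero he f
  refine ⟨f + s • e, add_mem hfW (W.smul_mem s heW), fun hU => hfUe ?_, hs⟩
  simpa using sub_mem (mem_sup_left hU) (mem_sup_right (smul_mem _ s (mem_span_singleton_self e)))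

theorem exists_orthogonal_eq_self_inf_eq [IsAlgClosed K] [NeZero (2 : K)]
    (hB : B.Nondegenerate) (hsymm : B.IsSymm) {T : Submodule K V} (hT : B.IsIsotropic T)
    (hTV : 2 * finrank K T + 2 = finrank K V) :
    ∃ S₁ S₂ : Submodule K V, B.orthogonal S₁ = S₁ ∧ B.orthogonal S₂ = S₂ ∧ S₁ ⊓ S₂ = T := by
  have hTperp := finrank_orthogonal hB T
  have hext : ∀ x ∈ B.orthogonal T, x ∉ T → B x x = 0 →
      B.orthogonal (T ⊔ K ∙ x) = T ⊔ K ∙ x := fun x hx hxT hxx =>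
    (isIsotropic_sup_span_singleton hsymm.isRefl hT hx hxx).orthogonal_eq_self hB
      (by rw [finrank_sup_span_singleton hxT]; omega)
  obtain ⟨x₁, hx₁, hx₁T, hx₁x₁⟩ :=
    exists_mem_notMem_apply_self_eq_zero (B := B) (U := T) (W := B.orthogonal T) (by omega)
  have hS₁ := hext x₁ hx₁ hx₁T hx₁x₁
  have hS₁lt : T ⊔ K ∙ x₁ < B.orthogonal T := by
    refine lt_of_le_of_finrank_lt_finrank
      (sup_le hT.le_orthogonal ((span_singleton_le_iff_mem _ _).2 hx₁)) ?_
    rw [finrank_sup_span_singleton hx₁T]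
    omega
  obtain ⟨x₂, hx₂, hx₂S₁, hx₂x₂⟩ :=
    exists_mem_notMem_apply_self_eq_zero_of_orthogonal_eq_self hsymm hS₁ hS₁lt
  have hx₂T : x₂ ∉ T := fun h => hx₂S₁ (mem_sup_left h)
  refine ⟨_, _, hS₁, hext x₂ hx₂ hx₂T hx₂x₂, ?_⟩
  refine (eq_of_le_of_finrank_le (le_inf le_sup_left le_sup_left) ?_).symm
  have hlt : (T ⊔ K ∙ x₁) ⊓ (T ⊔ K ∙ x₂) < T ⊔ K ∙ x₂ := by
    refine lt_of_le_of_ne inf_le_right fun h => hx₂S₁ ?_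
    have hx₂S₂ : x₂ ∈ T ⊔ K ∙ x₂ := mem_sup_right (mem_span_singleton_self x₂)
    rw [← h] at hx₂S₂
    exact hx₂S₂.1
  have := finrank_lt_finrank_of_lt hlt
  rw [finrank_sup_span_singleton hx₂T] at this
  omega

end LinearMap.BilinForm

open LinearMap.BilinForm

/-- let `V` be a `2n`-dimensional complex vector space with a
nondegenerate symmetric bilinear form, `H` a hyperplane on which the form is
nondegenerate, and `L` a maximal isotropic subspace. Then `Σ ↦ Σ ∩ H` is a
bijection from the `n`-dimensional isotropic subspaces in the same family as
`L` (those with `dim(Σ ∩ L) ≡ n (mod 2)`) onto the `(n−1)`-dimensional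
isotropic subspaces of `H`. -/
theorem maximal_isotropic_family_bijOn_hyperplane
    (V : Type*) [AddCommGroup V] [Module ℂ V] [FiniteDimensional ℂ V]
    (n : ℕ) (hn : 1 ≤ n) (hV : Module.finrank ℂ V = 2 * n)
    (B : LinearMap.BilinForm ℂ V) (hB : B.Nondegenerate) (hsymm : B.IsSymm)
    (H : Submodule ℂ V) (hH : Module.finrank ℂ H = 2 * n - 1)
    (hBH : (B.restrict H).Nondegenerate)
    (L : Submodule ℂ V) (hL : Module.finrank ℂ L = n)
    (hLiso : ∀ x ∈ L, ∀ y ∈ L, B x y = 0) :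
    Set.BijOn (fun S : Submodule ℂ V => S ⊓ H)
      {S : Submodule ℂ V | Module.finrank ℂ S = n ∧
        (∀ x ∈ S, ∀ y ∈ S, B x y = 0) ∧
        Module.finrank ℂ (S ⊓ L : Submodule ℂ V) % 2 = n % 2}
      {T : Submodule ℂ V | T ≤ H ∧ Module.finrank ℂ T = n - 1 ∧
        ∀ x ∈ T, ∀ y ∈ T, B x y = 0} := by
  have hmeet : ∀ S : Submodule ℂ V, finrank ℂ S = n → B.IsIsotropic S →
      finrank ℂ ↥(S ⊓ H) = n - 1 := fun S hS hSiso => by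
    have := hSiso.finrank_inf_add_one (by omega) (by omega) hBH
    omega
  have hLperp : B.orthogonal L = L := IsIsotropic.orthogonal_eq_self hB hLiso (by omega)
  refine ⟨?_, ?_, ?_⟩
  · rintro S ⟨hS, hSiso : B.IsIsotropic S, -⟩
    exact ⟨inf_le_right, hmeet S hS hSiso, hSiso.mono inf_le_left⟩
  · rintro S₁ ⟨hS₁, hS₁iso : B.IsIsotropic S₁, hpar₁⟩ S₂ ⟨hS₂, hS₂iso : B.IsIsotropic S₂, hpar₂⟩
      (h : S₁ ⊓ H = S₂ ⊓ H)
    by_contra hne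
    have h₁₂ := finrank_inf_add_one_of_inf_eq hne (hS₁.trans hS₂.symm)
      (by rw [hmeet S₁ hS₁ hS₁iso, hS₁]; omega) h
    have := finrank_inf_add_finrank_inf_eq hB hsymm hLperp
      (hS₁iso.orthogonal_eq_self hB (by omega)) (hS₂iso.orthogonal_eq_self hB (by omega)) h₁₂
    omega
  · rintro T ⟨hTH, hT, hTiso⟩
    obtain ⟨S₁, S₂, hS₁, hS₂, rfl⟩ := exists_orthogonal_eq_self_inf_eq hB hsymm hTiso (by omega)
    have hrank₁ := two_mul_finrank_of_orthogonal_eq_self hB hS₁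
    have hpar := finrank_inf_add_finrank_inf_eq hB hsymm hLperp hS₁ hS₂ (by omega)
    obtain ⟨S, hS, hle, hparS⟩ : ∃ S, B.orthogonal S = S ∧ S₁ ⊓ S₂ ≤ S ∧
        finrank ℂ ↥(S ⊓ L) % 2 = n % 2 := by
      by_cases hpar₁ : finrank ℂ ↥(S₁ ⊓ L) % 2 = n % 2
      · exact ⟨S₁, hS₁, inf_le_left, hpar₁⟩
      · exact ⟨S₂, hS₂, inf_le_right, by omega⟩
    have hSn : finrank ℂ S = n := by
      have := two_mul_finrank_of_orthogonal_eq_self hB hS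
      omega
    have hSiso := isIsotropic_of_orthogonal_eq_self hS
    refine ⟨S, ⟨hSn, hSiso, hparS⟩, (eq_of_le_of_finrank_eq (le_inf hle hTH) ?_).symm⟩
    rw [hmeet S hSn hSiso, hT]
end

section
/- Work in the polynomial ring ℤ[x_1,…,x_N] (any finite number N of variables). For r ≥ 0 define q_r := ∑_{i=0}^r e_i · h_{r−i}, where e_i is the i-th elementary symmetric polynomial and h_j the j-th complete homogeneous symmetric polynomial in x_1,…,x_N; set q_r = 0 for r < 0. Then for every integer r ≥ 1, q_r² + 2 ∑_{i=1}^r (−1)^i q_{r+i} q_{r−i} = 0. (These are the defining relations of the ring of Schur Q-functions; for r = 1 this is q_1² = 2q_2.) -/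
/-!
With `E(t) = ∑ eᵢ tⁱ = ∏ (1 + xᵢ t)` and `H(t) = ∑ hⱼ tʲ = ∏ (1 - xᵢ t)⁻¹` we have
`E(-t) H(t) = 1`. Hence `Q(t) = E(t) H(t) = ∑ q_r t^r` satisfies `Q(t) Q(-t) = 1`, and the
relation is the vanishing of the coefficient of `t^{2r}` in `Q(t) Q(-t)`, after pairing the
terms `q_{r+i} q_{r-i}` and `q_{r-i} q_{r+i}`.
-/

open Finset MvPolynomial

/-- `q_r = ∑_{i=0}^r e_i · h_{r-i}` in `ℤ[x_1, …, x_N]`. -/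
noncomputable def qPoly (N r : ℕ) : MvPolynomial (Fin N) ℤ :=
  ∑ i ∈ Finset.range (r + 1),
    MvPolynomial.esymm (Fin N) ℤ i * MvPolynomial.hsymm (Fin N) ℤ (r - i)

theorem Finset.Nat.sum_antidiagonal_two_mul {M : Type*} [AddCommMonoid M] (f : ℕ → ℕ → M)
    (r : ℕ) :
    ∑ p ∈ antidiagonal (2 * r), f p.1 p.2 =
      f r r + ∑ i ∈ Icc 1 r, (f (r + i) (r - i) + f (r - i) (r + i)) := by
  rw [Finset.Nat.sum_antidiagonal_eq_sum_range_succ f, Nat.succ_eq_add_one,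
    show 2 * r + 1 = r + 1 + r by omega, sum_range_add, sum_range_succ, ← sum_range_reflect,
    ← Ico_add_one_right_eq_Icc, sum_Ico_eq_sum_range, Nat.add_sub_cancel, sum_add_distrib]
  have h_upper : ∀ j ∈ range r,
      f (r + 1 + j) (2 * r - (r + 1 + j)) = f (r + (1 + j)) (r - (1 + j)) :=
    fun j _ ↦ by congr 1 <;> omega
  have h_lower : ∀ j ∈ range r,
      f (r - 1 - j) (2 * r - (r - 1 - j)) = f (r - (1 + j)) (r + (1 + j)) :=
    fun j hj ↦ by have := mem_range.1 hj; congr 1 <;> omega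
  rw [sum_congr rfl h_upper, sum_congr rfl h_lower, show 2 * r - r = r by omega]
  abel

namespace PowerSeries

section CommSemiring

variable {A : Type*} [CommSemiring A]

theorem rescale_C (c a : A) : rescale c (C a) = C a := by
  ext n
  rw [coeff_rescale, coeff_C]
  split_ifs with h <;> simp [h]

end CommSemiring

variable {A : Type*} [CommRing A]

theorem mk_pow_mul_one_sub_C_mul_X (a : A) : mk (a ^ ·) * (1 - C a * X) = 1 := by
  simpa [rescale_mk, rescale_X] using congrArg (rescale a) (mk_one_mul_one_sub_eq_one A)

theorem mul_mul_rescale_neg_one_eq_one {E H : A⟦X⟧} (h : rescale (-1) E * H = 1) :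
    E * H * rescale (-1) (E * H) = 1 := by
  have h' : E * rescale (-1) H = 1 := by
    simpa [rescale_rescale] using congrArg (rescale (-1)) h
  calc E * H * rescale (-1) (E * H) = (rescale (-1) E * H) * (E * rescale (-1) H) := by
        rw [map_mul]; ring
    _ = 1 := by rw [h, h', one_mul]

theorem sq_coeff_add_two_mul_sum_eq_zero_of_mul_rescale_neg_one {Q : A⟦X⟧}
    (hQ : Q * rescale (-1) Q = 1) {r : ℕ} (hr : 1 ≤ r) :
    coeff r Q ^ 2 + 2 * ∑ i ∈ Icc 1 r, (-1) ^ i * coeff (r + i) Q * coeff (r - i) Q = 0 := by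
  have h := congrArg (coeff (2 * r)) hQ
  rw [coeff_mul, Finset.Nat.sum_antidiagonal_two_mul (fun a b ↦ coeff a Q * coeff b _),
    coeff_one, if_neg (by omega)] at h
  simp only [coeff_rescale] at h
  have h_sign : ∀ i ∈ Icc 1 r, (-1 : A) ^ (r - i) = (-1) ^ r * (-1) ^ i := fun i hi ↦ by
    conv_rhs => rw [← Nat.sub_add_cancel (mem_Icc.1 hi).2]
    rw [pow_add, mul_assoc, ← mul_pow, neg_one_mul, neg_neg, one_pow, mul_one]
  rw [← neg_one_pow_mul_eq_zero_iff (n := r), ← h, mul_add, mul_sum, mul_sum]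
  congr 1
  · ring
  · refine sum_congr rfl fun i hi ↦ ?_
    rw [h_sign i hi, pow_add]
    ring

end PowerSeries

namespace MvPolynomial

variable (σ R : Type*) [Fintype σ]

section CommSemiring

variable [CommSemiring R]

noncomputable def esymmSeries : PowerSeries (MvPolynomial σ R) := PowerSeries.mk (esymm σ R)

theorem esymmSeries_eq_prod :
    esymmSeries σ R = ∏ i, (1 + PowerSeries.C (X i) * PowerSeries.X) := by
  classical
  refine PowerSeries.ext fun n ↦ ?_
  simp only [esymmSeries, PowerSeries.coeff_mk, prod_one_add, prod_mul_distrib, prod_const,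
    ← map_prod, map_sum, PowerSeries.coeff_C_mul_X_pow, sum_ite, sum_const_zero, add_zero,
    esymm, powersetCard_eq_filter, eq_comm (a := n)]

variable [DecidableEq σ]

noncomputable def hsymmSeries : PowerSeries (MvPolynomial σ R) := PowerSeries.mk (hsymm σ R)

theorem hsymm_eq_sum_finsuppAntidiag (n : ℕ) :
    hsymm σ R n = ∑ l ∈ finsuppAntidiag univ n, ∏ i, X i ^ l i := by
  refine sum_bij' (fun s _ ↦ Multiset.toFinsupp s.1)
    (fun l hl ↦ ⟨Finsupp.toMultiset l, ?_⟩) (fun s _ ↦ ?_) (fun _ _ ↦ mem_univ _)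
    (fun s _ ↦ Subtype.ext (by simp)) (fun l _ ↦ by simp) (fun s _ ↦ ?_)
  · simpa [mem_finsuppAntidiag, Finsupp.card_toMultiset, Finsupp.sum_fintype] using hl
  · have h_card := (Multiset.toFinsupp_sum_eq s.1).trans s.2
    rw [Finsupp.sum_fintype _ _ fun _ ↦ rfl] at h_card
    exact mem_finsuppAntidiag.2 ⟨h_card, subset_univ _⟩
  · rw [Multiset.prod_map_eq_finprod, finprod_eq_prod_of_fintype]
    rfl

theorem hsymmSeries_eq_prod : hsymmSeries σ R = ∏ i, PowerSeries.mk (X i ^ ·) := by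
  refine PowerSeries.ext fun n ↦ ?_
  simp only [hsymmSeries, PowerSeries.coeff_mk, PowerSeries.coeff_prod,
    hsymm_eq_sum_finsuppAntidiag]

end CommSemiring

variable [CommRing R] [DecidableEq σ]

theorem rescale_neg_one_esymmSeries_mul_hsymmSeries :
    PowerSeries.rescale (-1) (esymmSeries σ R) * hsymmSeries σ R = 1 := by
  rw [esymmSeries_eq_prod, hsymmSeries_eq_prod, map_prod, ← prod_mul_distrib]
  refine prod_eq_one fun i _ ↦ ?_
  rw [map_add, map_one, map_mul, PowerSeries.rescale_C, PowerSeries.rescale_neg_one_X,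
    mul_neg, ← sub_eq_add_neg, mul_comm, PowerSeries.mk_pow_mul_one_sub_C_mul_X]

end MvPolynomial

theorem coeff_esymmSeries_mul_hsymmSeries (N r : ℕ) :
    PowerSeries.coeff r (esymmSeries (Fin N) ℤ * hsymmSeries (Fin N) ℤ) = qPoly N r := by
  simp only [PowerSeries.coeff_mul, Finset.Nat.sum_antidiagonal_eq_sum_range_succ_mk, qPoly,
    esymmSeries, hsymmSeries, PowerSeries.coeff_mk]

/-- the polynomials `q_r` satisfy the defining relations of the
ring of Schur Q-functions: `q_r² + 2 ∑_{i=1}^r (−1)^i q_{r+i} q_{r−i} = 0`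
for every `r ≥ 1`. -/
theorem qPoly_relations (N r : ℕ) (hr : 1 ≤ r) :
    qPoly N r ^ 2 +
      2 * ∑ i ∈ Finset.Icc 1 r,
        (-1 : MvPolynomial (Fin N) ℤ) ^ i * qPoly N (r + i) * qPoly N (r - i) = 0 := by
  have hQ := PowerSeries.mul_mul_rescale_neg_one_eq_one
    (rescale_neg_one_esymmSeries_mul_hsymmSeries (Fin N) ℤ)
  simpa only [coeff_esymmSeries_mul_hsymmSeries] using
    PowerSeries.sq_coeff_add_two_mul_sum_eq_zero_of_mul_rescale_neg_one hQ hr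
end

section
/- Let R be a commutative ring, let n ≥ 2, and let 𝒲_n(R) be the nilCoxeter algebra of the hyperoctahedral group over R, generated by u_0, u_1, …, u_{n−1}. For t ∈ R define C(t) := (1 + t u_{n−1}) ⋯ (1 + t u_1)(1 + t u_0)(1 + t u_0)(1 + t u_1) ⋯ (1 + t u_{n−1}). Then for all s, t ∈ R one has C(s) · C(t) = C(t) · C(s). -/
/-!
Write `h_k(t) = 1 + t u_k`; since `u_k² = 0`, `h_k(s) h_k(t) = h_k(s + t)`. Let `C_k(t)` be the
product defining `C(t)` on the first `k` generators, so `C_{k+1}(t) = h_k(t) C_k(t) h_k(t)`.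
For `i ≥ 1` the braid relation gives the Yang–Baxter equation
`h_i(a) h_{i+1}(a+b) h_i(b) = h_{i+1}(b) h_i(a+b) h_{i+1}(a)`, and `(u_0 u_1)² = (u_1 u_0)²` gives
the reflection equation, i.e. that `C_2(s) C_2(t)` is symmetric in `s, t`.
Now `C_{j+1}(s) C_{j+1}(t) = h_j(s) M_j(s,t) h_j(t)` with `M_j(s,t) = C_j(s) h_j(s+t) C_j(t)`, so
symmetry at level `j + 1` reads `M_j(s,t) = h_j(t-s) M_j(t,s) h_j(s-t)`. Substituting this into
`C_{j+2}(s) C_{j+2}(t) = h_{j+1}(s) h_j(s) h_{j+1}(t) M_j(s,t) h_{j+1}(s) h_j(t) h_{j+1}(t)`,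
two applications of Yang–Baxter turn the right side into its image under `s ↔ t`.
-/

/-- The defining relations of the nilCoxeter algebra of the hyperoctahedral
group `W_n`, on generators `u_0, …, u_{n−1}` (indexed by `Fin n`):
`u_i² = 0`; `u_i u_j = u_j u_i` for `|i − j| ≥ 2`; the braid relation
`u_i u_{i+1} u_i = u_{i+1} u_i u_{i+1}` for `i > 0`; and
`u_0 u_1 u_0 u_1 = u_1 u_0 u_1 u_0`. -/
inductive NilCoxRel (R : Type*) [CommRing R] (n : ℕ) :
    FreeAlgebra R (Fin n) → FreeAlgebra R (Fin n) → Prop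
  | sq (i : Fin n) : NilCoxRel R n (FreeAlgebra.ι R i * FreeAlgebra.ι R i) 0
  | comm (i j : Fin n) (h : (i : ℕ) + 2 ≤ (j : ℕ)) :
      NilCoxRel R n (FreeAlgebra.ι R i * FreeAlgebra.ι R j)
        (FreeAlgebra.ι R j * FreeAlgebra.ι R i)
  | braid (i j : Fin n) (h1 : 1 ≤ (i : ℕ)) (h2 : (j : ℕ) = (i : ℕ) + 1) :
      NilCoxRel R n
        (FreeAlgebra.ι R i * FreeAlgebra.ι R j * FreeAlgebra.ι R i)
        (FreeAlgebra.ι R j * FreeAlgebra.ι R i * FreeAlgebra.ι R j)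
  | braid0 (i j : Fin n) (h1 : (i : ℕ) = 0) (h2 : (j : ℕ) = 1) :
      NilCoxRel R n
        (FreeAlgebra.ι R i * FreeAlgebra.ι R j * FreeAlgebra.ι R i * FreeAlgebra.ι R j)
        (FreeAlgebra.ι R j * FreeAlgebra.ι R i * FreeAlgebra.ι R j * FreeAlgebra.ι R i)

/-- The nilCoxeter algebra `𝒲_n(R)` of the hyperoctahedral group. -/
abbrev NilCoxeter (R : Type*) [CommRing R] (n : ℕ) := RingQuot (NilCoxRel R n)

/-- The generator `u_i` of the nilCoxeter algebra. -/
noncomputable def uGen (R : Type*) [CommRing R] (n : ℕ) (i : Fin n) : NilCoxeter R n :=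
  RingQuot.mkAlgHom R (NilCoxRel R n) (FreeAlgebra.ι R i)

/-- `C(t) = (1 + t u_{n−1}) ⋯ (1 + t u_1)(1 + t u_0)(1 + t u_0)(1 + t u_1) ⋯
(1 + t u_{n−1})`. -/
noncomputable def Cfun (R : Type*) [CommRing R] (n : ℕ) (t : R) : NilCoxeter R n :=
  (((List.finRange n).reverse).map (fun i => 1 + t • uGen R n i)).prod *
    ((List.finRange n).map (fun i => 1 + t • uGen R n i)).prod

section OneAddSmul

variable {R A : Type*} [CommRing R] [Ring A] [Algebra R A] {x y : A}

theorem one_add_smul_mul_one_add_smul (hx : x * x = 0) (s t : R) :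
    (1 + s • x) * (1 + t • x) = 1 + (s + t) • x := by
  simp only [mul_add, add_mul, one_mul, mul_one, smul_mul_smul_comm, hx, smul_zero, add_smul]
  abel

theorem yang_baxter_one_add_smul (hx : x * x = 0) (hy : y * y = 0)
    (hxy : x * y * x = y * x * y) {a b c : R} (habc : a + b = c) :
    (1 + a • x) * (1 + c • y) * (1 + b • x) = (1 + b • y) * (1 + c • x) * (1 + a • y) := by
  subst habc
  have hxy' : x * (y * x) = y * (x * y) := by simp only [← mul_assoc, hxy]
  simp only [mul_add, add_mul, one_mul, mul_one, smul_mul_assoc, mul_smul_comm, mul_assoc,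
    hx, hy, hxy', smul_zero, add_zero]
  module

theorem reflection_one_add_smul (hx : x * x = 0) (hy : y * y = 0)
    (hxy : x * y * x * y = y * x * y * x) (s t : R) :
    (1 + s • y) * (1 + (2 * s) • x) * (1 + (s + t) • y) * (1 + (2 * t) • x) * (1 + t • y) =
      (1 + t • y) * (1 + (2 * t) • x) * (1 + (t + s) • y) * (1 + (2 * s) • x) * (1 + s • y) := by
  have hy' (z : A) : y * (y * z) = 0 := by rw [← mul_assoc, hy, zero_mul]
  have hxy' : x * (y * (x * y)) = y * (x * (y * x)) := by simp only [← mul_assoc, hxy]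
  simp only [mul_add, add_mul, one_mul, mul_one, smul_mul_assoc, mul_smul_comm, mul_assoc,
    hx, hy, hy', hxy', smul_zero, mul_zero, add_zero]
  module

end OneAddSmul

namespace NilCoxeter

variable (R : Type*) [CommRing R] (n : ℕ)

/-- `u_k` for every `k : ℕ`, with `u_k = 0` for `k ≥ n`: since `0` satisfies all the defining
relations, they then hold with no range conditions on the indices. -/
noncomputable def gen (k : ℕ) : NilCoxeter R n :=
  if h : k < n then uGen R n ⟨k, h⟩ else 0

noncomputable def expGen (k : ℕ) (t : R) : NilCoxeter R n :=
  1 + t • gen R n k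

/-- `partialC R n k t` is `C(t)` built from the first `k` generators only. -/
noncomputable def partialC : ℕ → R → NilCoxeter R n
  | 0, _ => 1
  | k + 1, t => expGen R n k t * partialC k t * expGen R n k t

variable {R n}

theorem gen_mul_self (k : ℕ) : gen R n k * gen R n k = 0 := by
  unfold gen
  split_ifs with hk
  · simpa [uGen] using RingQuot.mkAlgHom_rel R (NilCoxRel.sq (R := R) ⟨k, hk⟩)
  · simp

theorem commute_gen {i j : ℕ} (h : i + 2 ≤ j) : Commute (gen R n i) (gen R n j) := by
  by_cases hj : j < n
  · have hi : i < n := by omega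
    simpa [Commute, SemiconjBy, gen, hi, hj, uGen] using
      RingQuot.mkAlgHom_rel R (NilCoxRel.comm (R := R) ⟨i, hi⟩ ⟨j, hj⟩ h)
  · simp [gen, hj]

theorem gen_braid {i : ℕ} (hi : 1 ≤ i) :
    gen R n i * gen R n (i + 1) * gen R n i = gen R n (i + 1) * gen R n i * gen R n (i + 1) := by
  by_cases hj : i + 1 < n
  · have hi' : i < n := by omega
    simpa [gen, hi', hj, uGen] using
      RingQuot.mkAlgHom_rel R (NilCoxRel.braid (R := R) ⟨i, hi'⟩ ⟨i + 1, hj⟩ hi rfl)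
  · simp [gen, hj]

theorem gen_braid_zero :
    gen R n 0 * gen R n 1 * gen R n 0 * gen R n 1 =
      gen R n 1 * gen R n 0 * gen R n 1 * gen R n 0 := by
  by_cases h1 : 1 < n
  · have h0 : 0 < n := by omega
    simpa [gen, h0, h1, uGen] using
      RingQuot.mkAlgHom_rel R (NilCoxRel.braid0 (R := R) ⟨0, h0⟩ ⟨1, h1⟩ rfl rfl)
  · simp [gen, h1]

theorem expGen_mul_expGen (k : ℕ) (s t : R) :
    expGen R n k s * expGen R n k t = expGen R n k (s + t) :=
  one_add_smul_mul_one_add_smul (gen_mul_self k) s t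

theorem expGen_mul_expGen_assoc (k : ℕ) (s t : R) (z : NilCoxeter R n) :
    expGen R n k s * (expGen R n k t * z) = expGen R n k (s + t) * z := by
  rw [← mul_assoc, expGen_mul_expGen]

theorem expGen_zero (k : ℕ) : expGen R n k 0 = 1 := by
  simp [expGen]

theorem commute_expGen {i j : ℕ} (h : i + 2 ≤ j) (a b : R) :
    Commute (expGen R n i a) (expGen R n j b) :=
  (Commute.one_left _).add_left <|
    ((Commute.one_right _).add_right ((commute_gen h).smul_right b)).smul_left a

theorem expGen_yang_baxter_assoc {k : ℕ} (hk : 1 ≤ k) {a b c : R} (habc : a + b = c)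
    (z : NilCoxeter R n) :
    expGen R n k a * (expGen R n (k + 1) c * (expGen R n k b * z)) =
      expGen R n (k + 1) b * (expGen R n k c * (expGen R n (k + 1) a * z)) := by
  simp only [← mul_assoc, expGen,
    yang_baxter_one_add_smul (gen_mul_self k) (gen_mul_self (k + 1)) (gen_braid hk) habc]

theorem partialC_succ_mul_partialC_succ (k : ℕ) (s t : R) :
    partialC R n (k + 1) s * partialC R n (k + 1) t =
      expGen R n k s * (partialC R n k s * expGen R n k (s + t) * partialC R n k t) *
        expGen R n k t := by
  simp only [partialC, mul_assoc, expGen_mul_expGen_assoc]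

theorem commute_expGen_partialC {j k : ℕ} (h : k + 1 ≤ j) (a t : R) :
    Commute (expGen R n j a) (partialC R n k t) := by
  induction k with
  | zero => exact Commute.one_right _
  | succ k ih =>
    have hjk : Commute (expGen R n j a) (expGen R n k t) := (commute_expGen (by omega) t a).symm
    exact (hjk.mul_right (ih (by omega))).mul_right hjk

theorem commute_partialC_two (s t : R) : Commute (partialC R n 2 s) (partialC R n 2 t) := by
  have := reflection_one_add_smul (gen_mul_self (R := R) (n := n) 0) (gen_mul_self 1)
    gen_braid_zero s t
  simp only [Commute, SemiconjBy, partialC, mul_one, mul_assoc, expGen_mul_expGen,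
    expGen_mul_expGen_assoc, ← two_mul]
  simpa only [mul_assoc, expGen] using this

theorem partialC_add_two_mul_partialC_add_two {j : ℕ} (hj : 1 ≤ j) (s t : R) :
    partialC R n (j + 2) s * partialC R n (j + 2) t =
      expGen R n (j + 1) s * expGen R n j s * expGen R n (j + 1) t *
        (partialC R n j s * expGen R n j (s + t) * partialC R n j t) *
        expGen R n (j + 1) s * expGen R n j t * expGen R n (j + 1) t := by
  rw [partialC_succ_mul_partialC_succ]
  simp only [partialC, mul_assoc]
  rw [expGen_yang_baxter_assoc hj rfl, (commute_expGen_partialC le_rfl t s).left_comm,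
    (commute_expGen_partialC le_rfl s t).left_comm]

theorem commute_partialC_add_two {j : ℕ} (hj : 1 ≤ j) {s t : R}
    (h : Commute (partialC R n (j + 1) s) (partialC R n (j + 1) t)) :
    Commute (partialC R n (j + 2) s) (partialC R n (j + 2) t) := by
  have hM : partialC R n j s * expGen R n j (s + t) * partialC R n j t =
      expGen R n j (t - s) * (partialC R n j t * expGen R n j (t + s) * partialC R n j s) *
        expGen R n j (s - t) := by
    have h' := h.eq
    rw [partialC_succ_mul_partialC_succ, partialC_succ_mul_partialC_succ] at h'
    calc _ = expGen R n j (-s) * (expGen R n j s * (partialC R n j s * expGen R n j (s + t) *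
            partialC R n j t) * expGen R n j t) * expGen R n j (-t) := by
          simp only [mul_assoc, expGen_mul_expGen, expGen_mul_expGen_assoc, neg_add_cancel,
            add_neg_cancel, expGen_zero, one_mul, mul_one]
      _ = _ := by
          rw [h']
          simp only [mul_assoc, expGen_mul_expGen, expGen_mul_expGen_assoc, neg_add_eq_sub,
            ← sub_eq_add_neg]
  calc partialC R n (j + 2) s * partialC R n (j + 2) t
      = expGen R n (j + 1) s * expGen R n j s * expGen R n (j + 1) t *
          (expGen R n j (t - s) * (partialC R n j t * expGen R n j (t + s) * partialC R n j s) *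
            expGen R n j (s - t)) *
          expGen R n (j + 1) s * expGen R n j t * expGen R n (j + 1) t := by
        rw [partialC_add_two_mul_partialC_add_two hj, hM]
    _ = expGen R n (j + 1) t * expGen R n j t * expGen R n (j + 1) s *
          (partialC R n j t * expGen R n j (t + s) * partialC R n j s) *
          expGen R n (j + 1) t * expGen R n j s * expGen R n (j + 1) s := by
        simp only [mul_assoc]
        rw [expGen_yang_baxter_assoc hj (add_sub_cancel s t),
          expGen_yang_baxter_assoc hj (sub_add_cancel s t), expGen_mul_expGen_assoc,
          expGen_mul_expGen, add_sub_cancel, sub_add_cancel]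
    _ = partialC R n (j + 2) t * partialC R n (j + 2) s :=
        (partialC_add_two_mul_partialC_add_two hj t s).symm

theorem commute_partialC : ∀ (k : ℕ) (s t : R), Commute (partialC R n k s) (partialC R n k t)
  | 0, _, _ => Commute.one_left _
  | 1, s, t => by
    simp only [Commute, SemiconjBy, partialC, mul_one, expGen_mul_expGen, add_comm]
  | 2, s, t => commute_partialC_two s t
  | j + 3, s, t => commute_partialC_add_two (by omega) (commute_partialC (j + 2) s t)

theorem partialC_eq_prod (k : ℕ) (t : R) :
    partialC R n k t =
      ((List.range k).map (expGen R n · t)).reverse.prod *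
        ((List.range k).map (expGen R n · t)).prod := by
  induction k with
  | zero => simp [partialC]
  | succ k ih =>
    simp only [partialC, ih, List.range_succ, List.map_append, List.reverse_append,
      List.prod_append, List.map_cons, List.map_nil, List.reverse_cons, List.reverse_nil,
      List.nil_append, List.prod_cons, List.prod_nil, mul_one, mul_assoc]

theorem Cfun_eq_partialC (t : R) : Cfun R n t = partialC R n n t := by
  have hmap : (List.finRange n).map (fun i => 1 + t • uGen R n i) =
      (List.range n).map (expGen R n · t) := by
    rw [← List.map_coe_finRange_eq_range, List.map_map]
    congr 1
    funext i
    simp [expGen, gen]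
  rw [Cfun, List.map_reverse, hmap, partialC_eq_prod]

end NilCoxeter

theorem Cfun_commute_general (R : Type*) [CommRing R] (n : ℕ) (s t : R) :
    Cfun R n s * Cfun R n t = Cfun R n t * Cfun R n s := by
  simpa only [NilCoxeter.Cfun_eq_partialC] using (NilCoxeter.commute_partialC n s t).eq

/-- Fomin–Kirillov: `C(s) C(t) = C(t) C(s)` in the nilCoxeter
algebra of the hyperoctahedral group. -/
theorem Cfun_commute (R : Type*) [CommRing R] (n : ℕ) (hn : 2 ≤ n) (s t : R) :
    Cfun R n s * Cfun R n t = Cfun R n t * Cfun R n s :=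
  Cfun_commute_general R n s t
end

section
/- Let R be a commutative ring, let n ≥ 2, and let 𝒲_n(R) be the nilCoxeter algebra of the hyperoctahedral group over R, generated by u_0, u_1, …, u_{n−1}. For t ∈ R define C(t) := (1 + t u_{n−1}) ⋯ (1 + t u_1)(1 + t u_0)(1 + t u_0)(1 + t u_1) ⋯ (1 + t u_{n−1}) and A_1(t) := (1 + t u_{n−1})(1 + t u_{n−2}) ⋯ (1 + t u_1). Then for every y ∈ R, C(y) · A_1(−y) = A_1(y) · (1 + 2y u_0). -/
/-- `A_1(t) = (1 + t u_{n−1})(1 + t u_{n−2}) ⋯ (1 + t u_1)` (the factor for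
`i = 0` is replaced by `1`). -/
noncomputable def A1fun (R : Type*) [CommRing R] (n : ℕ) (t : R) : NilCoxeter R n :=
  (((List.finRange n).reverse).map
    (fun i : Fin n => if (i : ℕ) = 0 then 1 else 1 + t • uGen R n i)).prod

theorem uGen_mul_self (R : Type*) [CommRing R] (n : ℕ) (i : Fin n) :
    uGen R n i * uGen R n i = 0 := by
  simpa only [uGen, map_mul, map_zero] using
    RingQuot.mkAlgHom_rel R (NilCoxRel.sq (R := R) i)

theorem one_add_smul_mul_one_add_smul_of_mul_self_eq_zero {R A : Type*} [CommRing R]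
    [Ring A] [Algebra R A] {a : A} (ha : a * a = 0) (s t : R) :
    (1 + s • a) * (1 + t • a) = 1 + (s + t) • a := by
  rw [add_mul, one_mul, mul_add, mul_one, smul_mul_smul_comm, ha, smul_zero, add_zero, add_smul]
  abel

theorem List.prod_map_mul_prod_map_reverse_eq_one {α M : Type*} [Monoid M] (f g : α → M) :
    ∀ L : List α, (∀ i ∈ L, f i * g i = 1) → (L.map f).prod * (L.reverse.map g).prod = 1
  | [], _ => by simp
  | a :: L, h => by
    have ih := prod_map_mul_prod_map_reverse_eq_one f g L fun i hi => h i (mem_cons_of_mem a hi)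
    rw [reverse_cons, map_append, prod_append, map_cons, prod_cons, map_singleton,
      prod_singleton, mul_assoc, ← mul_assoc (L.map f).prod, ih, one_mul, h a mem_cons_self]

section

variable (R : Type*) [CommRing R] (m : ℕ) (t : R)

theorem A1fun_succ :
    A1fun R (m + 1) t =
      ((List.finRange m).reverse.map fun i => 1 + t • uGen R (m + 1) i.succ).prod := by
  simp only [A1fun, List.finRange_succ, List.reverse_cons, List.map_append, List.map_reverse,
    List.map_map, Function.comp_def, List.prod_append, List.map_singleton, List.prod_singleton,
    Fin.val_succ, Fin.val_zero, Nat.succ_ne_zero, if_false, if_true, mul_one]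

theorem Cfun_succ :
    Cfun R (m + 1) t =
      A1fun R (m + 1) t * ((1 + t • uGen R (m + 1) 0) * (1 + t • uGen R (m + 1) 0)) *
        ((List.finRange m).map fun i => 1 + t • uGen R (m + 1) i.succ).prod := by
  simp only [Cfun, A1fun_succ, List.finRange_succ, List.reverse_cons, List.map_append,
    List.map_cons, List.map_nil, List.map_reverse, List.map_map, Function.comp_def,
    List.prod_append, List.prod_cons, List.prod_nil, one_mul, mul_assoc]

theorem Cfun_succ_mul_A1fun_neg :
    Cfun R (m + 1) t * A1fun R (m + 1) (-t) =
      A1fun R (m + 1) t * (1 + (2 * t) • uGen R (m + 1) 0) := by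
  have hcancel : ((List.finRange m).map fun i => 1 + t • uGen R (m + 1) i.succ).prod *
      A1fun R (m + 1) (-t) = 1 := by
    rw [A1fun_succ]
    refine List.prod_map_mul_prod_map_reverse_eq_one _ _ _ fun i _ => ?_
    rw [one_add_smul_mul_one_add_smul_of_mul_self_eq_zero (uGen_mul_self R _ _), add_neg_cancel,
      zero_smul, add_zero]
  rw [Cfun_succ, mul_assoc, hcancel, mul_one,
    one_add_smul_mul_one_add_smul_of_mul_self_eq_zero (uGen_mul_self R _ _), two_mul]

end

/-- `C(y) · A_1(−y) = A_1(y) · (1 + 2y u_0)` in the nilCoxeter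
algebra of the hyperoctahedral group. -/
theorem Cfun_mul_A1fun_neg (R : Type*) [CommRing R] (n : ℕ) (hn : 2 ≤ n) (y : R) :
    Cfun R n y * A1fun R n (-y) =
      A1fun R n y * (1 + (2 * y) • uGen R n ⟨0, by omega⟩) := by
  obtain ⟨m, rfl⟩ : ∃ m, n = m + 1 := ⟨n - 1, by omega⟩
  exact Cfun_succ_mul_A1fun_neg R m y
end

section
/- Let ℓ ≥ 1 and work in the field of rational functions ℚ(x_1,…,x_{2ℓ}) (the fraction field of the polynomial ring ℚ[x_1,…,x_{2ℓ}]). Let M be the 2ℓ × 2ℓ skew-symmetric matrix with entries M_{ij} = (x_i − x_j)/(x_i + x_j). Then det(M) = ∏_{1 ≤ i < j ≤ 2ℓ} ((x_i − x_j)/(x_i + x_j))². (This is equivalent to Schur's Pfaffian identity Pf( (x_i − x_j)/(x_i + x_j) ) = ∏_{i<j} (x_i − x_j)/(x_i + x_j), since the determinant of a skew-symmetric matrix of even size is the square of its Pfaffian.) -/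
/-!
Clearing the first two rows and columns of `M = ((x_i - x_j)/(x_i + x_j))` by block elimination
gives `det M = ((x_1 - x_2)/(x_1 + x_2))² · det S`, where the Schur complement `S` is the same
matrix in `x_3, …, x_n` conjugated by the diagonal matrix with entries
`(x_1 - x_k)/(x_1 + x_k) · (x_2 - x_k)/(x_2 + x_k)`. Entrywise, this shape of `S` is exactly the
four-variable case of Schur's Pfaffian identity, checked by clearing denominators; induction on
`n` finishes the proof.
-/

open Finset Matrix

variable {K : Type*} [Field K]

def schurRatio (s t : K) : K := (s - t) / (s + t)

lemma schurRatio_self (s : K) : schurRatio s s = 0 := by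
  simp [schurRatio]

lemma schurRatio_swap (s t : K) : schurRatio t s = -schurRatio s t := by
  rw [schurRatio, schurRatio, add_comm, ← neg_sub, neg_div]

lemma schurRatio_pfaffian_four {a b u v : K} (hab : a + b ≠ 0) (hau : a + u ≠ 0)
    (hav : a + v ≠ 0) (hbu : b + u ≠ 0) (hbv : b + v ≠ 0) (huv : u + v ≠ 0) :
    schurRatio a b * schurRatio u v - schurRatio a u * schurRatio b v +
        schurRatio a v * schurRatio b u =
      schurRatio a b * schurRatio a u * schurRatio a v * schurRatio b u * schurRatio b v *
        schurRatio u v := by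
  simp only [schurRatio]
  field_simp
  ring

def schurMatrix {ι : Type*} (x : ι → K) : Matrix ι ι K :=
  of fun i j => schurRatio (x i) (x j)

lemma schurMatrix_sumElim {m n : Type*} (y : m → K) (z : n → K) :
    schurMatrix (Sum.elim y z) =
      fromBlocks (schurMatrix y) (of fun i j => schurRatio (y i) (z j))
        (of fun i j => schurRatio (z i) (y j)) (schurMatrix z) := by
  ext (i | i) (j | j) <;> rfl

theorem Matrix.det_fromBlocks_of_mul_add_eq_zero {m n R : Type*} [Fintype m] [DecidableEq m]
    [Fintype n] [DecidableEq n] [CommRing R] {A : Matrix m m R} {B : Matrix m n R}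
    {C : Matrix n m R} {D : Matrix n n R} {U : Matrix m n R} (h : A * U + B = 0) :
    (fromBlocks A B C D).det = A.det * (C * U + D).det :=
  calc (fromBlocks A B C D).det = (fromBlocks A B C D * fromBlocks 1 U 0 1).det := by
        rw [det_mul, det_fromBlocks_zero₂₁, det_one, det_one, mul_one, mul_one]
    _ = (fromBlocks A 0 C (C * U + D)).det := by
        simp only [fromBlocks_multiply, Matrix.mul_one, Matrix.mul_zero, add_zero, h]
    _ = A.det * (C * U + D).det := det_fromBlocks_zero₁₂ _ _ _

theorem det_schurMatrix_sumElim {ι : Type*} [Fintype ι] [DecidableEq ι] (a b : K) (z : ι → K)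
    (hab : a + b ≠ 0) (ha : ∀ k, a + z k ≠ 0) (hb : ∀ k, b + z k ≠ 0)
    (hz : Pairwise fun i j => z i + z j ≠ 0) :
    (schurMatrix (Sum.elim ![a, b] z)).det =
      (schurRatio a b * ∏ k, schurRatio a (z k) * schurRatio b (z k)) ^ 2 *
        (schurMatrix z).det := by
  obtain rfl | hne := eq_or_ne a b
  · rw [det_zero_of_row_eq (i := Sum.inl 0) (j := Sum.inl 1) (by simp) rfl, schurRatio_self]
    ring
  have hp : schurRatio a b ≠ 0 := div_ne_zero (sub_ne_zero.2 hne) hab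
  set c : ι → K := fun k => schurRatio a (z k) * schurRatio b (z k)
  -- `U = -A⁻¹ B` for the top-left block `A = !![0, p; -p, 0]`, `p = schurRatio a b`
  set U : Matrix (Fin 2) ι K :=
    (schurRatio a b)⁻¹ • of ![fun k => schurRatio b (z k), fun k => -schurRatio a (z k)]
  have hAU : schurMatrix ![a, b] * U + of (fun i j => schurRatio (![a, b] i) (z j)) = 0 := by
    ext i k
    fin_cases i <;>
      simp [U, schurMatrix, mul_apply, Fin.sum_univ_two, schurRatio_self, schurRatio_swap a b, hp]
  have hCU : of (fun i j => schurRatio (z i) (![a, b] j)) * U + schurMatrix z =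
      diagonal c * schurMatrix z * diagonal c := by
    ext i j
    rw [mul_diagonal, diagonal_mul]
    simp only [Matrix.add_apply, mul_apply, Fin.sum_univ_two, U, c, schurMatrix, of_apply,
      Matrix.smul_apply, smul_eq_mul, Matrix.cons_val_zero, Matrix.cons_val_one,
      schurRatio_swap a (z i), schurRatio_swap b (z i)]
    obtain rfl | hij := eq_or_ne i j
    · rw [schurRatio_self]
      ring
    · have h4 := schurRatio_pfaffian_four hab (ha i) (ha j) (hb i) (hb j) (hz hij)
      field_simp
      linear_combination h4
  rw [schurMatrix_sumElim, det_fromBlocks_of_mul_add_eq_zero hAU, hCU, det_mul, det_mul,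
    det_diagonal, det_fin_two]
  simp only [schurMatrix, of_apply, Matrix.cons_val_zero, Matrix.cons_val_one, schurRatio_self,
    schurRatio_swap a b]
  ring

lemma det_schurMatrix_fin_succ_succ {n : ℕ} (x : Fin (n + 2) → K) :
    (schurMatrix x).det =
      (schurMatrix (Sum.elim ![x 0, x 1] fun k : Fin n => x k.succ.succ)).det := by
  let e : Fin 2 ⊕ Fin n ≃ Fin (n + 2) := finSumFinEquiv.trans (finCongr (add_comm 2 n))
  have hxe : x ∘ e = Sum.elim ![x 0, x 1] fun k => x k.succ.succ := by
    ext (i | k)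
    · fin_cases i <;> rfl
    · simp only [Function.comp_apply, Sum.elim_inr]
      congr 1
      ext
      simp [e]
  rw [← hxe, ← det_submatrix_equiv_self e]
  rfl

lemma Fin.prod_filter_fst_lt_snd_succ {M : Type*} [CommMonoid M] {n : ℕ}
    (g : Fin (n + 1) → Fin (n + 1) → M) :
    ∏ p ∈ univ.filter (fun p : Fin (n + 1) × Fin (n + 1) => p.1 < p.2), g p.1 p.2 =
      (∏ j : Fin n, g 0 j.succ) *
        ∏ p ∈ univ.filter (fun p : Fin n × Fin n => p.1 < p.2), g p.1.succ p.2.succ := by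
  simp [prod_filter, ← univ_product_univ, prod_product, Fin.prod_univ_succ]

theorem det_schurMatrix {n : ℕ} (hn : Even n) (x : Fin n → K)
    (hx : Pairwise fun i j => x i + x j ≠ 0) :
    (schurMatrix x).det =
      ∏ p ∈ univ.filter (fun p : Fin n × Fin n => p.1 < p.2),
        schurRatio (x p.1) (x p.2) ^ 2 := by
  induction n using Nat.twoStepInduction with
  | zero => simp
  | one => exact absurd hn (by decide)
  | more n ih _ =>
    have h0 : ∀ k : Fin n, x 0 + x k.succ.succ ≠ 0 := fun k => hx (Fin.succ_ne_zero _).symm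
    have h1 : ∀ k : Fin n, x 1 + x k.succ.succ ≠ 0 := fun k => hx (by simp [Fin.ext_iff])
    have hz : Pairwise fun i j : Fin n => x i.succ.succ + x j.succ.succ ≠ 0 :=
      fun i j h => hx (by simpa using h)
    rw [det_schurMatrix_fin_succ_succ, det_schurMatrix_sumElim _ _ _ (hx zero_ne_one) h0 h1 hz,
      ih (by simpa [Nat.even_add] using hn) _ hz,
      Fin.prod_filter_fst_lt_snd_succ fun i j => schurRatio (x i) (x j) ^ 2,
      Fin.prod_filter_fst_lt_snd_succ fun i j => schurRatio (x i.succ) (x j.succ) ^ 2,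
      Fin.prod_univ_succ]
    simp only [Fin.succ_zero_eq_one, mul_pow, prod_mul_distrib, prod_pow]
    ring

lemma MvPolynomial.X_add_X_ne_zero {σ R : Type*} [CommSemiring R] [Nontrivial R] {i j : σ}
    (h : i ≠ j) : (X i + X j : MvPolynomial σ R) ≠ 0 := by
  classical
  intro h0
  simpa [coeff_X, Finsupp.single_eq_single_iff, h.symm] using
    congrArg (coeff (Finsupp.single i 1)) h0

set_option maxHeartbeats 1000000 in
theorem schur_pfaffian_det_general (l : ℕ) :
    Matrix.det (Matrix.of fun i j : Fin (2 * l) =>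
      ((algebraMap (MvPolynomial (Fin (2 * l)) ℚ)
          (FractionRing (MvPolynomial (Fin (2 * l)) ℚ)) (MvPolynomial.X i) -
        algebraMap (MvPolynomial (Fin (2 * l)) ℚ)
          (FractionRing (MvPolynomial (Fin (2 * l)) ℚ)) (MvPolynomial.X j)) /
       (algebraMap (MvPolynomial (Fin (2 * l)) ℚ)
          (FractionRing (MvPolynomial (Fin (2 * l)) ℚ)) (MvPolynomial.X i) +
        algebraMap (MvPolynomial (Fin (2 * l)) ℚ)
          (FractionRing (MvPolynomial (Fin (2 * l)) ℚ)) (MvPolynomial.X j)))) =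
    ∏ p ∈ Finset.univ.filter (fun p : Fin (2 * l) × Fin (2 * l) => p.1 < p.2),
      ((algebraMap (MvPolynomial (Fin (2 * l)) ℚ)
          (FractionRing (MvPolynomial (Fin (2 * l)) ℚ)) (MvPolynomial.X p.1) -
        algebraMap (MvPolynomial (Fin (2 * l)) ℚ)
          (FractionRing (MvPolynomial (Fin (2 * l)) ℚ)) (MvPolynomial.X p.2)) /
       (algebraMap (MvPolynomial (Fin (2 * l)) ℚ)
          (FractionRing (MvPolynomial (Fin (2 * l)) ℚ)) (MvPolynomial.X p.1) +
        algebraMap (MvPolynomial (Fin (2 * l)) ℚ)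
          (FractionRing (MvPolynomial (Fin (2 * l)) ℚ)) (MvPolynomial.X p.2))) ^ 2 := by
  refine det_schurMatrix (even_two_mul l) _ fun i j hij => ?_
  simp only [← map_add]
  exact (map_ne_zero_iff _ (IsFractionRing.injective _ _)).2 (MvPolynomial.X_add_X_ne_zero hij)

set_option maxHeartbeats 1000000 in
/-- Schur's Pfaffian identity, determinant form: in the field
of rational functions `ℚ(x_1,…,x_{2ℓ})`, the skew-symmetric matrix with
entries `(x_i − x_j)/(x_i + x_j)` has determinant
`∏_{i<j} ((x_i − x_j)/(x_i + x_j))²`. -/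
theorem schur_pfaffian_det (l : ℕ) (hl : 1 ≤ l) :
    Matrix.det (Matrix.of fun i j : Fin (2 * l) =>
      ((algebraMap (MvPolynomial (Fin (2 * l)) ℚ)
          (FractionRing (MvPolynomial (Fin (2 * l)) ℚ)) (MvPolynomial.X i) -
        algebraMap (MvPolynomial (Fin (2 * l)) ℚ)
          (FractionRing (MvPolynomial (Fin (2 * l)) ℚ)) (MvPolynomial.X j)) /
       (algebraMap (MvPolynomial (Fin (2 * l)) ℚ)
          (FractionRing (MvPolynomial (Fin (2 * l)) ℚ)) (MvPolynomial.X i) +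
        algebraMap (MvPolynomial (Fin (2 * l)) ℚ)
          (FractionRing (MvPolynomial (Fin (2 * l)) ℚ)) (MvPolynomial.X j)))) =
    ∏ p ∈ Finset.univ.filter (fun p : Fin (2 * l) × Fin (2 * l) => p.1 < p.2),
      ((algebraMap (MvPolynomial (Fin (2 * l)) ℚ)
          (FractionRing (MvPolynomial (Fin (2 * l)) ℚ)) (MvPolynomial.X p.1) -
        algebraMap (MvPolynomial (Fin (2 * l)) ℚ)
          (FractionRing (MvPolynomial (Fin (2 * l)) ℚ)) (MvPolynomial.X p.2)) /
       (algebraMap (MvPolynomial (Fin (2 * l)) ℚ)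
          (FractionRing (MvPolynomial (Fin (2 * l)) ℚ)) (MvPolynomial.X p.1) +
        algebraMap (MvPolynomial (Fin (2 * l)) ℚ)
          (FractionRing (MvPolynomial (Fin (2 * l)) ℚ)) (MvPolynomial.X p.2))) ^ 2 :=
  schur_pfaffian_det_general l
end

section
/- Model the hyperoctahedral group W_n as the group of permutations w of {−n,…,−1,1,…,n} satisfying w(−a) = −w(a) for all a, and write w_i := w(i) for 1 ≤ i ≤ n. Fix 0 ≤ k ≤ n−1. Call w ∈ W_n k-Grassmannian if 0 < w_1 < w_2 < ⋯ < w_k and w_{k+1} < w_{k+2} < ⋯ < w_n (for k = 0 the first chain of inequalities is empty, so the condition is w_1 < w_2 < ⋯ < w_n). Then the set of k-Grassmannian elements of W_n is in bijection with the set of k-strict partitions λ with at most n−k parts and largest part λ_1 ≤ n+k (i.e. whose Young diagram fits inside an (n−k) × (n+k) rectangle). -/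
/-- The hyperoctahedral group `W_n`, modeled as permutations `w` of `ℤ` with
`w(−a) = −w(a)` for all `a` and `w(a) = a` whenever `|a| > n` (so `w`
permutes `{−n,…,−1,1,…,n}`). -/
def SignedPerms (n : ℕ) : Set (Equiv.Perm ℤ) :=
  {w | (∀ a : ℤ, w (-a) = -w a) ∧ ∀ a : ℤ, (n : ℤ) < |a| → w a = a}

/-- `w ∈ W_n` is `k`-Grassmannian: `0 < w_1 < ⋯ < w_k` and
`w_{k+1} < w_{k+2} < ⋯ < w_n`; equivalently, `0 < w_1` when `k ≥ 1`, and
`w_i < w_{i+1}` for all `1 ≤ i ≤ n − 1` with `i ≠ k`. -/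
def IsKGrassmannian (n k : ℕ) (w : Equiv.Perm ℤ) : Prop :=
  (1 ≤ k → 0 < w 1) ∧
    ∀ i : ℤ, 1 ≤ i → i + 1 ≤ (n : ℤ) → i ≠ (k : ℤ) → w i < w (i + 1)

/-- `k`-strict partitions fitting in the `(n−k) × (n+k)` rectangle: weakly
decreasing with at most `n−k` parts, no part `> k` repeated, and largest part
at most `n+k`. -/
def KStrictRect (n k : ℕ) (lam : Fin (n - k) → ℕ) : Prop :=
  Antitone lam ∧ (∀ i j : Fin (n - k), i ≠ j → k < lam i → lam i ≠ lam j) ∧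
    ∀ i, lam i ≤ n + k

/-!
A `k`-Grassmannian `w` is determined by its window `(w_1, …, w_n)`, and `λ_j` records the entry
`w_{k+j}`: a negative entry `-m` gives the large part `k + m`, a positive entry `c` gives the
small part `#{i ≤ k | w_i > c}`. Conversely the large parts of `λ` fix the negative entries, and
then the positive values left over are distributed: the entry for a small part `λ_j` is the
positive value having exactly (number of earlier small parts) + `(k - λ_j)` positive values below
it, and the `k` remaining positive values, in increasing order, form the first block. Both
directions are rank computations in finite sets of integers, and a window whose absolute values
permute `[1, n]` extends uniquely to a signed permutation.
-/

open Finset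

namespace Finset

variable {α β : Type*} [LinearOrder α]

lemma card_filter_image_lt [LinearOrder β] {f : β → α} {s : Finset β} (hf : StrictMonoOn f s)
    {x : β} (hx : x ∈ s) : #{y ∈ s.image f | y < f x} = #{z ∈ s | z < x} := by
  rw [filter_image, card_image_of_injOn (hf.injOn.mono (coe_subset.2 (filter_subset _ _)))]
  congr 1
  exact filter_congr fun z hz => hf.lt_iff_lt hz hx

lemma card_filter_lt_add_card_filter_gt {s : Finset α} {x : α} (hx : x ∉ s) :
    #{y ∈ s | y < x} + #{y ∈ s | x < y} = #s := by
  rw [← card_filter_add_card_filter_not (s := s) (· < x)]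
  congr 2
  refine filter_congr fun y hy => ?_
  rw [not_lt]
  exact ⟨le_of_lt, fun h => h.lt_of_ne' (ne_of_mem_of_not_mem hy hx)⟩

variable [Inhabited α]

/-- The `t`-th smallest element of `s`, counting from `0` (junk value `default` for `t ≥ #s`). -/
def sortedNth (s : Finset α) (t : ℕ) : α := s.sort.getD t default

lemma sortedNth_eq_getElem (s : Finset α) {t : ℕ} (ht : t < #s) :
    s.sortedNth t = s.sort[t]'(by rwa [length_sort]) := by
  have ht' : t < s.sort.length := by rwa [length_sort]
  simp [sortedNth, List.getD_eq_getElem?_getD, List.getElem?_eq_getElem ht']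

lemma sortedNth_mem {s : Finset α} {t : ℕ} (ht : t < #s) : s.sortedNth t ∈ s := by
  rw [sortedNth_eq_getElem s ht, ← mem_sort (· ≤ ·)]
  exact List.getElem_mem _

lemma sortedNth_lt_sortedNth {s : Finset α} {t t' : ℕ} (h : t < t') (ht' : t' < #s) :
    s.sortedNth t < s.sortedNth t' := by
  rw [sortedNth_eq_getElem s (h.trans ht'), sortedNth_eq_getElem s ht']
  exact (sortedLT_sort s).strictMono_get h

lemma strictMonoOn_sortedNth (s : Finset α) : StrictMonoOn s.sortedNth (range #s) :=
  fun _ _ _ ht' h => sortedNth_lt_sortedNth h (mem_range.1 ht')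

lemma image_sortedNth_range (s : Finset α) : (range #s).image s.sortedNth = s := by
  refine eq_of_subset_of_card_le (image_subset_iff.2 fun t ht => sortedNth_mem (mem_range.1 ht)) ?_
  rw [card_image_of_injOn (strictMonoOn_sortedNth s).injOn, card_range]

lemma card_filter_lt_sortedNth {s : Finset α} {t : ℕ} (ht : t < #s) :
    #{x ∈ s | x < s.sortedNth t} = t := by
  have key := card_filter_image_lt (strictMonoOn_sortedNth s) (mem_range.2 ht)
  rw [image_sortedNth_range] at key
  rw [key]
  convert card_range t using 2
  ext z
  simp only [mem_filter, mem_range]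
  omega

lemma sortedNth_card_filter_lt {s : Finset α} {x : α} (hx : x ∈ s) :
    s.sortedNth #{y ∈ s | y < x} = x := by
  rw [← image_sortedNth_range s, mem_image] at hx
  obtain ⟨t, ht, rfl⟩ := hx
  rw [card_filter_lt_sortedNth (mem_range.1 ht)]

end Finset

lemma Set.BijOn.bijective_of_eqOn_compl {α : Type*} {f : α → α} {s : Set α}
    (h : Set.BijOn f s s) (h' : Set.EqOn f id sᶜ) : Function.Bijective f := by
  refine ⟨fun a b hab => ?_, fun x => ?_⟩
  · by_cases ha : a ∈ s <;> by_cases hb : b ∈ s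
    · exact h.injOn ha hb hab
    · exact absurd (hab ▸ h.mapsTo ha) (by rwa [h' hb])
    · exact absurd (hab.symm ▸ h.mapsTo hb) (by rwa [h' ha])
    · rwa [h' ha, h' hb] at hab
  · by_cases hx : x ∈ s
    · obtain ⟨a, -, rfl⟩ := h.surjOn hx
      exact ⟨a, rfl⟩
    · exact ⟨x, h' hx⟩

namespace SignedPerms

variable {n : ℕ} {w w' : Equiv.Perm ℤ}

lemma apply_zero (hw : w ∈ SignedPerms n) : w 0 = 0 := by
  have := hw.1 0
  rw [neg_zero] at this
  omega

lemma abs_apply_le (hw : w ∈ SignedPerms n) {a : ℤ} (ha : |a| ≤ n) : |w a| ≤ n := by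
  by_contra h
  have hwa := w.injective (hw.2 _ (not_le.1 h))
  rw [hwa] at h
  exact h ha

lemma exists_apply_eq_or_eq_neg (hw : w ∈ SignedPerms n) {x : ℤ} (h1 : 1 ≤ x) (h2 : x ≤ n) :
    ∃ a : ℤ, 1 ≤ a ∧ a ≤ n ∧ (w a = x ∨ w a = -x) := by
  set b := w.symm x
  have hwb : w b = x := w.apply_symm_apply x
  have hb0 : b ≠ 0 := fun h => by rw [h, apply_zero hw] at hwb; omega
  have hbn : |b| ≤ n := by
    by_contra h
    have := hw.2 b (not_le.1 h)
    rw [hwb] at this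
    rw [← this, abs_of_pos (by omega)] at h
    omega
  rcases lt_or_gt_of_ne hb0 with hneg | hpos
  · exact ⟨-b, by omega, by rw [abs_of_neg hneg] at hbn; omega, Or.inr (by rw [hw.1, hwb])⟩
  · exact ⟨b, by omega, by rw [abs_of_pos hpos] at hbn; omega, Or.inl hwb⟩

lemma eq_of_eqOn (hw : w ∈ SignedPerms n) (hw' : w' ∈ SignedPerms n)
    (h : Set.EqOn w w' (Set.Icc 1 n)) : w = w' := by
  ext a
  rcases lt_trichotomy a 0 with ha | rfl | ha
  · by_cases han : -a ≤ n
    · have := h ⟨(by omega : (1 : ℤ) ≤ -a), han⟩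
      rw [hw.1, hw'.1] at this
      omega
    · rw [hw.2 a (by rw [abs_of_neg ha]; omega), hw'.2 a (by rw [abs_of_neg ha]; omega)]
  · rw [apply_zero hw, apply_zero hw']
  · by_cases han : a ≤ n
    · exact h ⟨by omega, han⟩
    · rw [hw.2 a (by rw [abs_of_pos ha]; omega), hw'.2 a (by rw [abs_of_pos ha]; omega)]

def oddExt (n : ℕ) (v : ℤ → ℤ) (a : ℤ) : ℤ :=
  if 1 ≤ a ∧ a ≤ n then v a else if 1 ≤ -a ∧ -a ≤ n then -v (-a) else a

lemma oddExt_neg (v : ℤ → ℤ) (a : ℤ) : oddExt n v (-a) = -oddExt n v a := by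
  simp only [oddExt, neg_neg]
  split_ifs <;> omega

lemma oddExt_zero (v : ℤ → ℤ) : oddExt n v 0 = 0 := by
  have := oddExt_neg (n := n) v 0
  rw [neg_zero] at this
  omega

lemma oddExt_of_mem (v : ℤ → ℤ) {a : ℤ} (h1 : 1 ≤ a) (h2 : a ≤ n) : oddExt n v a = v a :=
  if_pos ⟨h1, h2⟩

lemma oddExt_of_lt_abs (v : ℤ → ℤ) {a : ℤ} (ha : (n : ℤ) < |a|) : oddExt n v a = a := by
  rw [oddExt, if_neg, if_neg] <;> cases abs_cases a <;> omega

lemma bijOn_oddExt {v : ℤ → ℤ} (hv : Set.BijOn (fun a => |v a|) (Set.Icc 1 n) (Set.Icc 1 n)) :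
    Set.BijOn (oddExt n v) (Set.Icc (-n) n) (Set.Icc (-n) n) := by
  refine ((Set.finite_Icc _ _).surjOn_iff_bijOn_of_mapsTo ?_).1 ?_
  · rintro a ⟨h1, h2⟩
    rcases lt_trichotomy a 0 with ha | rfl | ha
    · have := hv.mapsTo (show -a ∈ Set.Icc 1 (n : ℤ) from ⟨by omega, by omega⟩)
      rw [← neg_neg a, oddExt_neg, oddExt_of_mem v (by omega) (by omega)]
      constructor <;> cases abs_cases (v (-a)) <;> simp_all <;> omega
    · rw [oddExt_zero]
      constructor <;> omega
    · have := hv.mapsTo (show a ∈ Set.Icc 1 (n : ℤ) from ⟨by omega, h2⟩)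
      rw [oddExt_of_mem v (by omega) h2]
      constructor <;> cases abs_cases (v a) <;> simp_all <;> omega
  · intro x ⟨h1, h2⟩
    rcases eq_or_ne x 0 with rfl | hx
    · exact ⟨0, ⟨by omega, by omega⟩, oddExt_zero v⟩
    obtain ⟨a, ⟨ha1, ha2⟩, hax⟩ := hv.surjOn (show |x| ∈ Set.Icc 1 (n : ℤ) by
      constructor <;> cases abs_cases x <;> omega)
    rcases abs_eq_abs.1 hax with h | h
    · exact ⟨a, ⟨by omega, ha2⟩, (oddExt_of_mem v ha1 ha2).trans h⟩
    · refine ⟨-a, ⟨by omega, by omega⟩, ?_⟩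
      rw [oddExt_neg, oddExt_of_mem v ha1 ha2, h, neg_neg]

lemma exists_eqOn (v : ℤ → ℤ) (hv : Set.BijOn (fun a => |v a|) (Set.Icc 1 n) (Set.Icc 1 n)) :
    ∃ w ∈ SignedPerms n, Set.EqOn w v (Set.Icc 1 n) := by
  have hf : Function.Bijective (oddExt n v) :=
    (bijOn_oddExt hv).bijective_of_eqOn_compl fun a ha => oddExt_of_lt_abs v
      (by rw [Set.mem_compl_iff, Set.mem_Icc, not_and_or] at ha; cases abs_cases a <;> omega)
  exact ⟨Equiv.ofBijective _ hf, ⟨oddExt_neg v, fun a => oddExt_of_lt_abs v⟩,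
    fun a ⟨h1, h2⟩ => oddExt_of_mem v h1 h2⟩

end SignedPerms

section Grassmannian

variable {n k : ℕ} {w : Equiv.Perm ℤ}

lemma isKGrassmannian_iff (hkn : k ≤ n) :
    IsKGrassmannian n k w ↔ (1 ≤ k → 0 < w 1) ∧ StrictMonoOn w (Set.Icc (1 : ℤ) k) ∧
      StrictMonoOn w (Set.Icc ((k : ℤ) + 1) n) := by
  constructor
  · rintro ⟨hpos, hchain⟩
    refine ⟨hpos, strictMonoOn_of_lt_add_one Set.ordConnected_Icc fun a _ ha ha' => ?_,
      strictMonoOn_of_lt_add_one Set.ordConnected_Icc fun a _ ha ha' => ?_⟩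
    · exact hchain a ha.1 (by have := ha'.2; omega) (by have := ha'.2; omega)
    · exact hchain a (by have := ha.1; omega) ha'.2 (by have := ha.1; omega)
  · rintro ⟨hpos, hfirst, hsecond⟩
    refine ⟨hpos, fun i hi hin hik => ?_⟩
    rcases lt_or_gt_of_ne hik with h | h
    · exact hfirst ⟨hi, h.le⟩ ⟨by omega, by omega⟩ (lt_add_one i)
    · exact hsecond ⟨by omega, by omega⟩ ⟨by omega, hin⟩ (lt_add_one i)

lemma IsKGrassmannian.pos (hg : IsKGrassmannian n k w) (hkn : k ≤ n) {i : ℤ} (h1 : 1 ≤ i)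
    (h2 : i ≤ k) : 0 < w i := by
  obtain ⟨hpos, hfirst, -⟩ := (isKGrassmannian_iff hkn).1 hg
  exact (hpos (by omega)).trans_le
    (hfirst.monotoneOn ⟨le_rfl, by omega⟩ ⟨h1, h2⟩ h1)

end Grassmannian

namespace KGrassmannian

variable {n k : ℕ} {w : Equiv.Perm ℤ} {μ : ℕ → ℕ}

/-- The part of the shape attached to the entry `x = w_{k+1+j}` (parts are indexed from `0`): it
is `k + |x|` if `x < 0` and `#{i ≤ k | w_i > x}` if `x > 0`, because the first block of a
`k`-Grassmannian element is positive. -/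
noncomputable def shapePart (k : ℕ) (w : Equiv.Perm ℤ) (x : ℤ) : ℕ :=
  #{i ∈ Icc (1 : ℤ) k | x < w i} + (-x).toNat

noncomputable def shape (n k : ℕ) (w : Equiv.Perm ℤ) (j : Fin (n - k)) : ℕ :=
  shapePart k w (w (k + 1 + j))

lemma shapePart_antitone : Antitone (shapePart k w) := fun _ _ hxy =>
  add_le_add (card_le_card (monotone_filter_right _ fun _ _ h => hxy.trans_lt h))
    (Int.toNat_le_toNat (neg_le_neg hxy))

lemma shapePart_of_neg (hpos : ∀ i : ℤ, 1 ≤ i → i ≤ k → 0 < w i) {x : ℤ} (hx : x < 0) :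
    (shapePart k w x : ℤ) = k - x := by
  have hall : ({i ∈ Icc (1 : ℤ) k | x < w i} : Finset ℤ) = Icc (1 : ℤ) k :=
    filter_true_of_mem fun i hi => hx.trans (hpos i (mem_Icc.1 hi).1 (mem_Icc.1 hi).2)
  rw [shapePart, hall, Int.card_Icc]
  push_cast
  omega

lemma shapePart_of_nonneg {x : ℤ} (hx : 0 ≤ x) :
    shapePart k w x = #{i ∈ Icc (1 : ℤ) k | x < w i} := by
  rw [shapePart, Int.toNat_of_nonpos (by omega), add_zero]

lemma shapePart_le_of_nonneg {x : ℤ} (hx : 0 ≤ x) : shapePart k w x ≤ k := by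
  rw [shapePart_of_nonneg hx]
  exact (card_filter_le _ _).trans (by simp)

lemma shape_mem (hw : w ∈ SignedPerms n) (hg : IsKGrassmannian n k w) (hkn : k ≤ n) :
    KStrictRect n k (shape n k w) := by
  have hsecond := ((isKGrassmannian_iff hkn).1 hg).2.2
  have hpos : ∀ i : ℤ, 1 ≤ i → i ≤ k → 0 < w i := fun i h1 h2 => hg.pos hkn h1 h2
  have hmem (j : Fin (n - k)) : (k : ℤ) + 1 + (j : ℕ) ∈ Set.Icc ((k : ℤ) + 1) n :=
    ⟨by omega, by have := j.isLt; omega⟩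
  have hneg (j : Fin (n - k)) (hj : k < shape n k w j) : w (k + 1 + (j : ℕ)) < 0 :=
    not_le.1 fun h => hj.not_ge (shapePart_le_of_nonneg h)
  refine ⟨fun i j hij => shapePart_antitone (hsecond.monotoneOn (hmem i) (hmem j) ?_),
    fun i j hij hi heq => hij ?_, fun j => ?_⟩
  · have : (i : ℕ) ≤ j := hij
    omega
  · have e := congrArg (fun m : ℕ => (m : ℤ)) heq
    simp only [shape, shapePart_of_neg hpos (hneg i hi),
      shapePart_of_neg hpos (hneg j (heq ▸ hi))] at e
    have := w.injective (by linarith : w (k + 1 + (i : ℕ)) = w (k + 1 + (j : ℕ)))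
    exact Fin.ext (by omega)
  · have hle := SignedPerms.abs_apply_le hw (a := k + 1 + (j : ℕ))
      (by rw [abs_of_pos (by omega)]; exact (hmem j).2)
    have hcard : #{i ∈ Icc (1 : ℤ) k | w (k + 1 + (j : ℕ)) < w i} ≤ k :=
      (card_filter_le _ _).trans (by simp)
    rw [abs_le] at hle
    simp only [shape, shapePart]
    omega

/-- `KStrictRect`, for a partition written as a sequence `μ 0 ≥ μ 1 ≥ ⋯`. -/
structure IsKStrictSeq (n k : ℕ) (μ : ℕ → ℕ) : Prop where
  antitone : ∀ ⦃i j⦄, i ≤ j → j < n - k → μ j ≤ μ i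
  strict : ∀ ⦃i j⦄, i < j → j < n - k → k < μ j → μ j < μ i
  le : ∀ ⦃j⦄, j < n - k → μ j ≤ n + k

def partSeq {m : ℕ} (lam : Fin m → ℕ) (j : ℕ) : ℕ := if h : j < m then lam ⟨j, h⟩ else 0

lemma partSeq_apply {m : ℕ} (lam : Fin m → ℕ) (j : Fin m) : partSeq lam j = lam j := by
  simp [partSeq]

lemma isKStrictSeq_partSeq {lam : Fin (n - k) → ℕ} (h : KStrictRect n k lam) :
    IsKStrictSeq n k (partSeq lam) where
  antitone i j hij hj := by
    rw [partSeq, partSeq, dif_pos hj, dif_pos (hij.trans_lt hj)]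
    exact h.1 (show (⟨i, _⟩ : Fin (n - k)) ≤ ⟨j, hj⟩ from hij)
  strict i j hij hj hk := by
    have hi : i < n - k := hij.trans hj
    rw [partSeq, dif_pos hj] at hk ⊢
    rw [partSeq, dif_pos hi]
    exact (h.1 (show (⟨i, hi⟩ : Fin (n - k)) ≤ ⟨j, hj⟩ from hij.le)).lt_of_ne
      (h.2.1 ⟨j, hj⟩ ⟨i, hi⟩ (by simp [Fin.ext_iff]; omega) hk)
  le j hj := by
    rw [partSeq, dif_pos hj]
    exact h.2.2 _

noncomputable section

variable (n k μ)

def largeIdx : Finset ℕ := {j ∈ range (n - k) | k < μ j}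

def smallIdx : Finset ℕ := {j ∈ range (n - k) | μ j ≤ k}

def negAbsVals : Finset ℤ := (largeIdx n k μ).image fun j => (μ j : ℤ) - k

def posVals : Finset ℤ := Icc (1 : ℤ) n \ negAbsVals n k μ

/-- The value `w_{k+1+j}` for a small part `μ j ≤ k`: the positive values below it are the
smaller small-part values and `k - μ j` values of the first block. -/
def smallVal (j : ℕ) : ℤ :=
  (posVals n k μ).sortedNth (#{i ∈ smallIdx n k μ | i < j} + (k - μ j))

def smallVals : Finset ℤ := (smallIdx n k μ).image (smallVal n k μ)

def firstVals : Finset ℤ := posVals n k μ \ smallVals n k μ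

/-- The window `(w_1, …, w_n)` of the `k`-Grassmannian element of shape `μ`. -/
def window (a : ℤ) : ℤ :=
  if a ≤ k then (firstVals n k μ).sortedNth (a - 1).toNat
  else if k < μ (a - k - 1).toNat then k - μ (a - k - 1).toNat
  else smallVal n k μ (a - k - 1).toNat

lemma window_of_lt {t : ℕ} (ht : t < k) :
    window n k μ (t + 1) = (firstVals n k μ).sortedNth t := by
  rw [window, if_pos (by omega)]
  congr
  omega

lemma window_add (j : ℕ) :
    window n k μ (k + 1 + j) = if k < μ j then (k : ℤ) - μ j else smallVal n k μ j := by
  rw [window, if_neg (by omega), show (k + 1 + j - k - 1 : ℤ).toNat = j by omega]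

end

lemma card_largeIdx_add_card_smallIdx : #(largeIdx n k μ) + #(smallIdx n k μ) = n - k := by
  have := card_filter_add_card_filter_not (s := range (n - k)) (fun j => k < μ j)
  simp only [not_lt, card_range] at this
  exact this

lemma negAbsVals_subset (hμ : IsKStrictSeq n k μ) : negAbsVals n k μ ⊆ Icc 1 n := by
  simp only [negAbsVals, largeIdx, subset_iff, mem_image, mem_filter, mem_range, mem_Icc]
  rintro _ ⟨j, ⟨hj, hk⟩, rfl⟩
  have := hμ.le hj
  omega

lemma card_negAbsVals (hμ : IsKStrictSeq n k μ) : #(negAbsVals n k μ) = #(largeIdx n k μ) := by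
  refine card_image_of_injOn fun i hi j hj hij => ?_
  simp only [largeIdx, coe_filter, mem_range] at hi hj hij
  by_contra hne
  rcases lt_or_gt_of_ne hne with h | h
  · exact (hμ.strict h hj.1 hj.2).ne (by omega)
  · exact (hμ.strict h hi.1 hi.2).ne (by omega)

lemma card_posVals (hμ : IsKStrictSeq n k μ) : #(posVals n k μ) = n - #(largeIdx n k μ) := by
  rw [posVals, card_sdiff_of_subset (negAbsVals_subset hμ), card_negAbsVals hμ, Int.card_Icc]
  omega

lemma mem_Icc_of_mem_posVals {x : ℤ} (hx : x ∈ posVals n k μ) : 1 ≤ x ∧ x ≤ n :=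
  mem_Icc.1 (mem_sdiff.1 hx).1

lemma smallVal_index_lt (hμ : IsKStrictSeq n k μ) (hkn : k ≤ n) {j : ℕ}
    (hj : j ∈ smallIdx n k μ) : #{i ∈ smallIdx n k μ | i < j} + (k - μ j) < #(posVals n k μ) := by
  have h1 : #{i ∈ smallIdx n k μ | i < j} < #(smallIdx n k μ) :=
    card_lt_card (filter_ssubset.2 ⟨j, hj, lt_irrefl j⟩)
  have h2 := card_largeIdx_add_card_smallIdx (n := n) (k := k) (μ := μ)
  rw [card_posVals hμ]
  omega

lemma smallVal_mem (hμ : IsKStrictSeq n k μ) (hkn : k ≤ n) {j : ℕ} (hj : j ∈ smallIdx n k μ) :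
    smallVal n k μ j ∈ posVals n k μ :=
  sortedNth_mem (smallVal_index_lt hμ hkn hj)

lemma strictMonoOn_smallVal (hμ : IsKStrictSeq n k μ) (hkn : k ≤ n) :
    StrictMonoOn (smallVal n k μ) (smallIdx n k μ) := by
  intro i hi j hj hij
  refine sortedNth_lt_sortedNth ?_ (smallVal_index_lt hμ hkn hj)
  have hcard : #{i' ∈ smallIdx n k μ | i' < i} < #{i' ∈ smallIdx n k μ | i' < j} :=
    card_lt_card ((ssubset_iff_of_subset (monotone_filter_right _ fun _ _ h => h.trans hij)).2
      ⟨i, mem_filter.2 ⟨hi, hij⟩, fun h => (mem_filter.1 h).2.false⟩)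
  have hanti := hμ.antitone hij.le (mem_range.1 (mem_filter.1 hj).1)
  omega

lemma smallVals_subset (hμ : IsKStrictSeq n k μ) (hkn : k ≤ n) :
    smallVals n k μ ⊆ posVals n k μ :=
  image_subset_iff.2 fun _ hj => smallVal_mem hμ hkn hj

lemma card_firstVals (hμ : IsKStrictSeq n k μ) (hkn : k ≤ n) : #(firstVals n k μ) = k := by
  have h := card_largeIdx_add_card_smallIdx (n := n) (k := k) (μ := μ)
  rw [firstVals, card_sdiff_of_subset (smallVals_subset hμ hkn), card_posVals hμ, smallVals,
    card_image_of_injOn (strictMonoOn_smallVal hμ hkn).injOn]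
  omega

lemma card_filter_firstVals_gt (hμ : IsKStrictSeq n k μ) (hkn : k ≤ n) {j : ℕ}
    (hj : j ∈ smallIdx n k μ) : #{p ∈ firstVals n k μ | smallVal n k μ j < p} = μ j := by
  have hrank := card_filter_lt_sortedNth (smallVal_index_lt hμ hkn hj)
  rw [← smallVal, ← sdiff_union_of_subset (smallVals_subset hμ hkn), filter_union,
    card_union_of_disjoint (disjoint_filter_filter sdiff_disjoint), ← firstVals, smallVals,
    card_filter_image_lt (strictMonoOn_smallVal hμ hkn) hj] at hrank
  have hnot : smallVal n k μ j ∉ firstVals n k μ :=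
    fun h => (mem_sdiff.1 h).2 (mem_image_of_mem _ hj)
  have hsum := card_filter_lt_add_card_filter_gt hnot
  have hle : μ j ≤ k := (mem_filter.1 hj).2
  rw [card_firstVals hμ hkn] at hsum
  omega

lemma mem_smallIdx_of_not_lt {j : ℕ} (hj : j < n - k) (h : ¬ k < μ j) : j ∈ smallIdx n k μ :=
  mem_filter.2 ⟨mem_range.2 hj, not_lt.1 h⟩

lemma sortedNth_firstVals_mem_posVals (hμ : IsKStrictSeq n k μ) (hkn : k ≤ n) {t : ℕ}
    (ht : t < k) : (firstVals n k μ).sortedNth t ∈ posVals n k μ :=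
  (mem_sdiff.1 (sortedNth_mem (s := firstVals n k μ) (by rwa [card_firstVals hμ hkn]))).1

lemma mapsTo_abs_window (hμ : IsKStrictSeq n k μ) (hkn : k ≤ n) :
    Set.MapsTo (fun a => |window n k μ a|) (Set.Icc 1 n) (Set.Icc 1 n) := by
  rintro a ⟨h1, h2⟩
  dsimp only
  rcases le_or_gt a k with hak | hak
  · obtain ⟨t, rfl⟩ : ∃ t : ℕ, a = t + 1 := ⟨(a - 1).toNat, by omega⟩
    have := mem_Icc_of_mem_posVals (sortedNth_firstVals_mem_posVals hμ hkn (t := t) (by omega))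
    rw [window_of_lt n k μ (by omega), abs_of_pos (by omega)]
    exact this
  · obtain ⟨j, rfl⟩ : ∃ j : ℕ, a = k + 1 + j := ⟨(a - k - 1).toNat, by omega⟩
    rw [window_add]
    split_ifs with hj
    · have := hμ.le (j := j) (by omega)
      rw [abs_of_neg (by omega)]
      constructor <;> omega
    · have := mem_Icc_of_mem_posVals
        (smallVal_mem hμ hkn (mem_smallIdx_of_not_lt (by omega) hj))
      rw [abs_of_pos (by omega)]
      exact this

/-- `[1, n]` is covered by `negAbsVals`, `smallVals` and `firstVals`: the absolute values of the
large-part entries, of the small-part entries and of the first block. -/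
lemma surjOn_abs_window (hμ : IsKStrictSeq n k μ) (hkn : k ≤ n) :
    Set.SurjOn (fun a => |window n k μ a|) (Set.Icc 1 n) (Set.Icc 1 n) := by
  intro x hx
  by_cases hneg : x ∈ negAbsVals n k μ
  · obtain ⟨j, hj, rfl⟩ := mem_image.1 hneg
    obtain ⟨hjm, hjk⟩ := mem_filter.1 hj
    have := mem_range.1 hjm
    refine ⟨k + 1 + j, ⟨by omega, by omega⟩, ?_⟩
    simp only [window_add, if_pos hjk]
    rw [abs_of_neg (by omega)]
    ring
  have hpos : x ∈ posVals n k μ := mem_sdiff.2 ⟨mem_Icc.2 hx, hneg⟩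
  have hx0 := (mem_Icc_of_mem_posVals hpos).1
  by_cases hsmall : x ∈ smallVals n k μ
  · obtain ⟨j, hj, rfl⟩ := mem_image.1 hsmall
    obtain ⟨hjm, hjk⟩ := mem_filter.1 hj
    have := mem_range.1 hjm
    refine ⟨k + 1 + j, ⟨by omega, by omega⟩, ?_⟩
    simp only [window_add, if_neg (not_lt.2 hjk)]
    exact abs_of_pos (by omega)
  · have hx' : x ∈ firstVals n k μ := mem_sdiff.2 ⟨hpos, hsmall⟩
    rw [← image_sortedNth_range (firstVals n k μ), mem_image] at hx'
    obtain ⟨t, ht, rfl⟩ := hx'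
    rw [mem_range, card_firstVals hμ hkn] at ht
    refine ⟨t + 1, ⟨by omega, by omega⟩, ?_⟩
    simp only [window_of_lt n k μ ht]
    exact abs_of_pos (by omega)

lemma bijOn_abs_window (hμ : IsKStrictSeq n k μ) (hkn : k ≤ n) :
    Set.BijOn (fun a => |window n k μ a|) (Set.Icc 1 n) (Set.Icc 1 n) :=
  ((Set.finite_Icc _ _).surjOn_iff_bijOn_of_mapsTo (mapsTo_abs_window hμ hkn)).1
    (surjOn_abs_window hμ hkn)

lemma strictMonoOn_window_first (hμ : IsKStrictSeq n k μ) (hkn : k ≤ n) :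
    StrictMonoOn (window n k μ) (Set.Icc (1 : ℤ) k) := by
  rintro a ⟨ha1, ha2⟩ b ⟨hb1, hb2⟩ hab
  obtain ⟨s, rfl⟩ : ∃ s : ℕ, a = s + 1 := ⟨(a - 1).toNat, by omega⟩
  obtain ⟨t, rfl⟩ : ∃ t : ℕ, b = t + 1 := ⟨(b - 1).toNat, by omega⟩
  rw [window_of_lt n k μ (by omega), window_of_lt n k μ (by omega)]
  exact sortedNth_lt_sortedNth (by omega) (by rw [card_firstVals hμ hkn]; omega)

lemma strictMonoOn_window_second (hμ : IsKStrictSeq n k μ) (hkn : k ≤ n) :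
    StrictMonoOn (window n k μ) (Set.Icc ((k : ℤ) + 1) n) := by
  rintro a ⟨ha1, ha2⟩ b ⟨hb1, hb2⟩ hab
  obtain ⟨i, rfl⟩ : ∃ i : ℕ, a = k + 1 + i := ⟨(a - k - 1).toNat, by omega⟩
  obtain ⟨j, rfl⟩ : ∃ j : ℕ, b = k + 1 + j := ⟨(b - k - 1).toNat, by omega⟩
  have hij : i < j := by omega
  have hjm : j < n - k := by omega
  have hsmall_pos {j' : ℕ} (h : j' ∈ smallIdx n k μ) : 0 < smallVal n k μ j' :=
    (mem_Icc_of_mem_posVals (smallVal_mem hμ hkn h)).1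
  rw [window_add, window_add]
  split_ifs with hi hj hj
  · have := hμ.strict hij hjm hj
    omega
  · have := hsmall_pos (mem_smallIdx_of_not_lt hjm hj)
    omega
  · exact absurd (hμ.antitone hij.le hjm) (by omega)
  · exact strictMonoOn_smallVal hμ hkn (mem_smallIdx_of_not_lt (by omega) hi)
      (mem_smallIdx_of_not_lt hjm hj) hij

lemma window_one_pos (hμ : IsKStrictSeq n k μ) (hkn : k ≤ n) (hk : 1 ≤ k) :
    0 < window n k μ 1 := by
  have h := window_of_lt n k μ (t := 0) hk
  rw [Nat.cast_zero, zero_add] at h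
  rw [h]
  exact (mem_Icc_of_mem_posVals (sortedNth_firstVals_mem_posVals hμ hkn hk)).1

lemma exists_mem_eqOn_window (hμ : IsKStrictSeq n k μ) (hkn : k ≤ n) :
    ∃ w, (w ∈ SignedPerms n ∧ IsKGrassmannian n k w) ∧
      Set.EqOn w (window n k μ) (Set.Icc 1 n) := by
  obtain ⟨w, hw, hwin⟩ := SignedPerms.exists_eqOn _ (bijOn_abs_window hμ hkn)
  refine ⟨w, ⟨hw, (isKGrassmannian_iff hkn).2 ⟨fun hk => ?_, ?_, ?_⟩⟩, hwin⟩
  · rw [hwin ⟨le_rfl, by omega⟩]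
    exact window_one_pos hμ hkn hk
  · exact (strictMonoOn_window_first hμ hkn).congr
      (hwin.symm.mono (Set.Icc_subset_Icc le_rfl (by exact_mod_cast hkn)))
  · exact (strictMonoOn_window_second hμ hkn).congr
      (hwin.symm.mono (Set.Icc_subset_Icc (by omega) le_rfl))

lemma shapePart_eq_of_eqOn_window (hμ : IsKStrictSeq n k μ) (hkn : k ≤ n)
    (hwin : Set.EqOn w (window n k μ) (Set.Icc 1 n)) {j : ℕ} (hj : j < n - k) :
    shapePart k w (w (k + 1 + j)) = μ j := by
  have himage : (Icc (1 : ℤ) k).image w = firstVals n k μ := by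
    refine eq_of_subset_of_card_le (image_subset_iff.2 fun i hi => ?_) ?_
    · obtain ⟨hi1, hi2⟩ := mem_Icc.1 hi
      obtain ⟨t, rfl⟩ : ∃ t : ℕ, i = t + 1 := ⟨(i - 1).toNat, by omega⟩
      rw [hwin ⟨hi1, by omega⟩, window_of_lt n k μ (by omega)]
      exact sortedNth_mem (by rw [card_firstVals hμ hkn]; omega)
    · rw [card_firstVals hμ hkn, card_image_of_injective _ w.injective, Int.card_Icc]
      omega
  have hcount (x : ℤ) : #{i ∈ Icc (1 : ℤ) k | x < w i} = #{p ∈ firstVals n k μ | x < p} := by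
    rw [← himage, filter_image, card_image_of_injective _ w.injective]
  rw [hwin ⟨by omega, by omega⟩, window_add, shapePart, hcount]
  split_ifs with hk
  · have hall : ({p ∈ firstVals n k μ | (k : ℤ) - μ j < p} : Finset ℤ) = firstVals n k μ :=
      filter_true_of_mem fun p hp =>
        lt_of_lt_of_le (by omega) (mem_Icc_of_mem_posVals (mem_sdiff.1 hp).1).1
    rw [hall, card_firstVals hμ hkn]
    omega
  · have hsmall := mem_smallIdx_of_not_lt hj hk
    have := (mem_Icc_of_mem_posVals (smallVal_mem hμ hkn hsmall)).1
    rw [card_filter_firstVals_gt hμ hkn hsmall, Int.toNat_of_nonpos (by omega), add_zero]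

lemma partSeq_shape {j : ℕ} (hj : j < n - k) :
    partSeq (shape n k w) j = shapePart k w (w (k + 1 + j)) := by
  simp [partSeq, hj, shape]

lemma lt_partSeq_shape_iff (hg : IsKGrassmannian n k w) (hkn : k ≤ n)
    {j : ℕ} (hj : j < n - k) : k < partSeq (shape n k w) j ↔ w (k + 1 + j) < 0 := by
  rw [partSeq_shape hj]
  refine ⟨fun h => not_le.1 fun h' => h.not_ge (shapePart_le_of_nonneg h'), fun h => ?_⟩
  have := shapePart_of_neg (fun i h1 h2 => hg.pos hkn h1 h2) h
  omega

lemma posVals_shape (hw : w ∈ SignedPerms n) (hg : IsKGrassmannian n k w) (hkn : k ≤ n) :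
    posVals n k (partSeq (shape n k w)) =
      (Icc (1 : ℤ) k).image w ∪
        (smallIdx n k (partSeq (shape n k w))).image (fun j : ℕ => w (k + 1 + j)) := by
  set μ := partSeq (shape n k w)
  have hμ : IsKStrictSeq n k μ := isKStrictSeq_partSeq (shape_mem hw hg hkn)
  refine eq_of_subset_of_card_le (fun x hx => ?_) ?_
  · obtain ⟨hx1, hx2⟩ := mem_Icc_of_mem_posVals hx
    obtain ⟨a, ha1, ha2, hax⟩ := SignedPerms.exists_apply_eq_or_eq_neg hw hx1 hx2
    rcases le_or_gt a k with hak | hak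
    · have := hg.pos hkn ha1 hak
      exact mem_union_left _ (mem_image.2 ⟨a, mem_Icc.2 ⟨ha1, hak⟩, by omega⟩)
    obtain ⟨j, rfl⟩ : ∃ j : ℕ, a = k + 1 + j := ⟨(a - k - 1).toNat, by omega⟩
    have hj : j < n - k := by omega
    rcases hax with hax | hax
    · have hsmall : j ∈ smallIdx n k μ :=
        mem_smallIdx_of_not_lt hj (by rw [lt_partSeq_shape_iff hg hkn hj]; omega)
      exact mem_union_right _ (mem_image.2 ⟨j, hsmall, hax⟩)
    · have hneg : w (k + 1 + j) < 0 := by omega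
      have hval := shapePart_of_neg (fun i h1 h2 => hg.pos hkn h1 h2) hneg
      rw [← partSeq_shape hj] at hval
      change (μ j : ℤ) = _ at hval
      refine absurd (mem_image.2 ⟨j, mem_filter.2 ⟨mem_range.2 hj,
        (lt_partSeq_shape_iff hg hkn hj).2 hneg⟩, ?_⟩) (mem_sdiff.1 hx).2
      omega
  · have h := card_largeIdx_add_card_smallIdx (n := n) (k := k) (μ := μ)
    have hP : #((Icc (1 : ℤ) k).image w) ≤ k := card_image_le.trans (by simp)
    have hC := card_image_le (s := smallIdx n k μ) (f := fun j : ℕ => w (k + 1 + j))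
    have := card_union_le ((Icc (1 : ℤ) k).image w)
      ((smallIdx n k μ).image fun j : ℕ => w (k + 1 + j))
    rw [card_posVals hμ]
    omega

lemma disjoint_image_Icc_image_add (w : Equiv.Perm ℤ) (s : Finset ℕ) :
    Disjoint ((Icc (1 : ℤ) k).image w) (s.image fun j : ℕ => w (k + 1 + j)) := by
  refine disjoint_left.2 fun x hx hx' => ?_
  obtain ⟨i, hi, rfl⟩ := mem_image.1 hx
  obtain ⟨j, -, hj⟩ := mem_image.1 hx'
  have := w.injective hj
  have := (mem_Icc.1 hi).2
  omega

lemma smallVal_shape (hw : w ∈ SignedPerms n) (hg : IsKGrassmannian n k w) (hkn : k ≤ n) {j : ℕ}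
    (hj : j ∈ smallIdx n k (partSeq (shape n k w))) :
    smallVal n k (partSeq (shape n k w)) j = w (k + 1 + j) := by
  set μ := partSeq (shape n k w)
  have hjm : j < n - k := mem_range.1 (mem_filter.1 hj).1
  have hnonneg : 0 ≤ w (k + 1 + j) :=
    not_lt.1 fun h => (mem_filter.1 hj).2.not_gt ((lt_partSeq_shape_iff hg hkn hjm).2 h)
  have hmono : StrictMonoOn (fun j : ℕ => w (k + 1 + j)) (smallIdx n k μ) := fun i hi j' hj' hij =>
    ((isKGrassmannian_iff hkn).1 hg).2.2
      ⟨by omega, by have := mem_range.1 (mem_filter.1 hi).1; omega⟩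
      ⟨by omega, by have := mem_range.1 (mem_filter.1 hj').1; omega⟩ (by omega)
  have hdisj := disjoint_image_Icc_image_add (k := k) w (smallIdx n k μ)
  have hnot : w (k + 1 + j) ∉ (Icc (1 : ℤ) k).image w :=
    disjoint_right.1 hdisj (mem_image_of_mem _ hj)
  have habove : #{y ∈ (Icc (1 : ℤ) k).image w | w (k + 1 + j) < y} = μ j := by
    change _ = partSeq (shape n k w) j
    rw [filter_image, card_image_of_injective _ w.injective, partSeq_shape hjm,
      shapePart_of_nonneg hnonneg]
  have hsum := card_filter_lt_add_card_filter_gt hnot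
  rw [card_image_of_injective _ w.injective, Int.card_Icc, habove] at hsum
  have hrank : #{y ∈ posVals n k μ | y < w (k + 1 + j)} =
      #{i ∈ smallIdx n k μ | i < j} + (k - μ j) := by
    rw [posVals_shape hw hg hkn, filter_union,
      card_union_of_disjoint (disjoint_filter_filter hdisj), card_filter_image_lt hmono hj]
    omega
  rw [smallVal, ← hrank]
  rw [posVals_shape hw hg hkn]
  exact sortedNth_card_filter_lt (mem_union_right _ (mem_image_of_mem _ hj))

lemma firstVals_shape (hw : w ∈ SignedPerms n) (hg : IsKGrassmannian n k w) (hkn : k ≤ n) :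
    firstVals n k (partSeq (shape n k w)) = (Icc (1 : ℤ) k).image w := by
  have hsmall : smallVals n k (partSeq (shape n k w)) =
      (smallIdx n k (partSeq (shape n k w))).image fun j : ℕ => w (k + 1 + j) :=
    image_congr fun j hj => smallVal_shape hw hg hkn hj
  rw [firstVals, hsmall, posVals_shape hw hg hkn,
    union_sdiff_cancel_right (disjoint_image_Icc_image_add w _)]

lemma eqOn_window_shape (hw : w ∈ SignedPerms n) (hg : IsKGrassmannian n k w) (hkn : k ≤ n) :
    Set.EqOn w (window n k (partSeq (shape n k w))) (Set.Icc 1 n) := by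
  rintro a ⟨h1, h2⟩
  rcases le_or_gt a k with hak | hak
  · obtain ⟨t, rfl⟩ : ∃ t : ℕ, a = t + 1 := ⟨(a - 1).toNat, by omega⟩
    have hfirst := ((isKGrassmannian_iff hkn).1 hg).2.1
    have hrank : #{y ∈ (Icc (1 : ℤ) k).image w | y < w (t + 1)} = t := by
      have hIcc : ({i ∈ Icc (1 : ℤ) k | i < t + 1} : Finset ℤ) = Icc (1 : ℤ) t := by
        ext i
        simp only [mem_filter, mem_Icc]
        omega
      rw [card_filter_image_lt (hfirst.mono (by simp)) (mem_Icc.2 ⟨h1, hak⟩), hIcc, Int.card_Icc]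
      omega
    have := sortedNth_card_filter_lt (mem_image_of_mem w (mem_Icc.2 ⟨h1, hak⟩))
    rw [hrank] at this
    rw [window_of_lt _ _ _ (by omega), firstVals_shape hw hg hkn, this]
  · obtain ⟨j, rfl⟩ : ∃ j : ℕ, a = k + 1 + j := ⟨(a - k - 1).toNat, by omega⟩
    have hj : j < n - k := by omega
    rw [window_add]
    split_ifs with hlt
    · have := shapePart_of_neg (fun i h1 h2 => hg.pos hkn h1 h2)
        ((lt_partSeq_shape_iff hg hkn hj).1 hlt)
      rw [partSeq_shape hj]
      omega
    · exact (smallVal_shape hw hg hkn (mem_smallIdx_of_not_lt hj hlt)).symm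

lemma injOn_shape (hkn : k ≤ n) :
    Set.InjOn (shape n k) {w | w ∈ SignedPerms n ∧ IsKGrassmannian n k w} := by
  intro w hw w' hw' h
  refine SignedPerms.eq_of_eqOn hw.1 hw'.1 fun a ha => ?_
  rw [eqOn_window_shape hw.1 hw.2 hkn ha, eqOn_window_shape hw'.1 hw'.2 hkn ha, h]

lemma surjOn_shape (hkn : k ≤ n) :
    Set.SurjOn (shape n k) {w | w ∈ SignedPerms n ∧ IsKGrassmannian n k w}
      {lam | KStrictRect n k lam} := by
  intro lam hlam
  have hμ := isKStrictSeq_partSeq hlam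
  obtain ⟨w, hw, hwin⟩ := exists_mem_eqOn_window hμ hkn
  exact ⟨w, hw, funext fun j =>
    (shapePart_eq_of_eqOn_window hμ hkn hwin j.isLt).trans (partSeq_apply lam j)⟩

end KGrassmannian

theorem kGrassmannian_bijection_kStrict_general (n k : ℕ) (hk : k ≤ n - 1) :
    ∃ f : Equiv.Perm ℤ → (Fin (n - k) → ℕ),
      Set.BijOn f {w | w ∈ SignedPerms n ∧ IsKGrassmannian n k w}
        {lam | KStrictRect n k lam} := by
  have hkn : k ≤ n := hk.trans (Nat.sub_le n 1)
  exact ⟨KGrassmannian.shape n k, fun w hw => KGrassmannian.shape_mem hw.1 hw.2 hkn,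
    KGrassmannian.injOn_shape hkn, KGrassmannian.surjOn_shape hkn⟩

/-- the `k`-Grassmannian elements of the hyperoctahedral group
`W_n` are in bijection with the `k`-strict partitions whose diagram fits in an
`(n−k) × (n+k)` rectangle. -/
theorem kGrassmannian_bijection_kStrict (n k : ℕ) (hk : k ≤ n - 1) (hn : 1 ≤ n) :
    ∃ f : Equiv.Perm ℤ → (Fin (n - k) → ℕ),
      Set.BijOn f {w | w ∈ SignedPerms n ∧ IsKGrassmannian n k w}
        {lam | KStrictRect n k lam} :=
  kGrassmannian_bijection_kStrict_general n k hk
end
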